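/- arXiv:1909.12549 — 3 statements merged into one kernel-verified Lean document; each statement's English description precedes it below -/
import Mathlib

section
/- Let G be a connected graph on n ≥ 2 vertices with m edges, τ spanning trees, degree vector d, and 2-forest matrix S. Then for every vertex v, λ_v(G) := −3dᵀSd + 12m·dᵀSe_v + 8m²τ + 4mτ − 12τ > 0. -/
open Matrix SimpleGraph

/-- `T` is a spanning tree of `G`: a subgraph (on the same vertex set) that is
connected and acyclic. -/
def IsSpanningTree {V : Type*} (G T : SimpleGraph V) : Prop :=
  T ≤ G ∧ T.Connected ∧ T.IsAcyclic

/-- The number of spanning trees of `G`. -/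
noncomputable def spanningTreeCount {V : Type*} (G : SimpleGraph V) : ℕ :=
  Nat.card {T : SimpleGraph V // IsSpanningTree G T}

/-- `F` is a spanning 2-forest of `G` separating `i` and `j`: an acyclic subgraph
with exactly two components, one containing `i` and the other containing `j`. -/
def IsTwoForestSep {V : Type*} (G F : SimpleGraph V) (i j : V) : Prop :=
  F ≤ G ∧ F.IsAcyclic ∧ ¬ F.Reachable i j ∧ ∀ x, F.Reachable x i ∨ F.Reachable x j

/-- The `(i,j)` entry of the 2-forest matrix of `G`. -/
noncomputable def twoForestCount {V : Type*} (G : SimpleGraph V) (i j : V) : ℕ :=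
  Nat.card {F : SimpleGraph V // IsTwoForestSep G F i j}

/-- The graph `G̃_v`: `G` with two new pendant vertices attached at `v`. -/
def tildeG {V : Type*} (G : SimpleGraph V) (v : V) : SimpleGraph (V ⊕ Fin 2) :=
  SimpleGraph.fromRel (fun x y =>
    (∃ a b, x = Sum.inl a ∧ y = Sum.inl b ∧ G.Adj a b) ∨
    (x = Sum.inl v ∧ ∃ c, y = Sum.inr c))

/-- The graph `Ĝ_v`: `G` with two new vertices `a, b` adjacent to `v` and to
each other. -/
def hatG {V : Type*} (G : SimpleGraph V) (v : V) : SimpleGraph (V ⊕ Fin 2) :=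
  SimpleGraph.fromRel (fun x y =>
    (∃ a b, x = Sum.inl a ∧ y = Sum.inl b ∧ G.Adj a b) ∨
    (x = Sum.inl v ∧ ∃ c, y = Sum.inr c) ∨
    (x = Sum.inr 0 ∧ y = Sum.inr 1))

/-- The degree vector of `H`, as a real vector. -/
noncomputable def degVec {W : Type*} (H : SimpleGraph W) : W → ℝ :=
  fun i => ((H.neighborSet i).ncard : ℝ)

/-- The number of edges of `H`, as a real number. -/
noncomputable def edgeCount {W : Type*} (H : SimpleGraph W) : ℝ :=
  (H.edgeSet.ncard : ℝ)

/-- The 2-forest matrix of `H`, as a real matrix. -/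
noncomputable def forestMatrix {W : Type*} (H : SimpleGraph W) : Matrix W W ℝ :=
  Matrix.of fun i j => ((twoForestCount H i j : ℝ))

/-- The Kemeny constant of `H`, via the formula `κ = dᵀSd / (4mτ)`. -/
noncomputable def kemeny {W : Type*} [Fintype W] (H : SimpleGraph W) : ℝ :=
  (degVec H ⬝ᵥ (forestMatrix H).mulVec (degVec H)) /
    (4 * edgeCount H * (spanningTreeCount H : ℝ))



section AuxLemmas

variable {V : Type*}

/-- Auxiliary: `F` is a spanning 2-forest of `G` (exactly two components). -/
def TwoForest (G F : SimpleGraph V) : Prop :=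
  F ≤ G ∧ F.IsAcyclic ∧ ∃ a b, ¬ F.Reachable a b ∧ ∀ x, F.Reachable x a ∨ F.Reachable x b

lemma acyclic_anti {F H : SimpleGraph V} (h : F ≤ H) (hH : H.IsAcyclic) : F.IsAcyclic :=
  fun _ c hc => hH (c.mapLe h) (hc.mapLe h)

lemma isTwoForestSep_iff' {G F : SimpleGraph V} {i j : V} :
    F ≤ G ∧ F.IsAcyclic ∧ ¬ F.Reachable i j ∧ (∀ x, F.Reachable x i ∨ F.Reachable x j)
      ↔ TwoForest G F ∧ ¬ F.Reachable i j := by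
  constructor
  · rintro ⟨h1, h2, h3, h4⟩
    exact ⟨⟨h1, h2, i, j, h3, h4⟩, h3⟩
  · rintro ⟨⟨h1, h2, a, b, hab, hcov⟩, hij⟩
    refine ⟨h1, h2, hij, ?_⟩
    rcases hcov i with hi | hi <;> rcases hcov j with hj | hj
    · exact absurd (hi.trans hj.symm) hij
    · intro x
      rcases hcov x with hx | hx
      · exact Or.inl (hx.trans hi.symm)
      · exact Or.inr (hx.trans hj.symm)
    · intro x
      rcases hcov x with hx | hx
      · exact Or.inr (hx.trans hj.symm)
      · exact Or.inl (hx.trans hi.symm)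
    · exact absurd (hi.trans hj.symm) hij

lemma TwoForest.reachable_iff' {G F : SimpleGraph V} (h : TwoForest G F) (i j w : V) :
    F.Reachable i j ↔ (F.Reachable i w ↔ F.Reachable j w) := by
  obtain ⟨-, -, a, b, hab, hcov⟩ := h
  constructor
  · intro hij
    exact ⟨fun h' => hij.symm.trans h', fun h' => hij.trans h'⟩
  · intro hiff
    rcases hcov i with hi | hi <;> rcases hcov j with hj | hj
    · exact hi.trans hj.symm
    · exfalso
      rcases hcov w with hw | hw
      · exact hab (hw.symm.trans (((hiff.mp (hi.trans hw.symm)).symm).trans hj))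
      · exact hab ((hi.symm.trans (hiff.mpr (hj.trans hw.symm))).trans hw)
    · exfalso
      rcases hcov w with hw | hw
      · exact hab ((hw.symm.trans ((hiff.mpr (hj.trans hw.symm)).symm)).trans hi)
      · exact hab ((hj.symm.trans (hiff.mp (hi.trans hw.symm))).trans hw)
    · exact hi.trans hj.symm

lemma reachable_delete_of_reachable {G : SimpleGraph V} {x y : V}
    (hxy : (G \ fromEdgeSet {s(x, y)}).Reachable x y) {u w : V} (h : G.Reachable u w) :
    (G \ fromEdgeSet {s(x, y)}).Reachable u w := by
  obtain ⟨p⟩ := h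
  induction p with
  | nil => exact Reachable.refl _
  | @cons a c _ hadj p ih =>
    by_cases he : s(a, c) = s(x, y)
    · rw [Sym2.eq_iff] at he
      rcases he with ⟨rfl, rfl⟩ | ⟨rfl, rfl⟩
      · exact hxy.trans ih
      · exact hxy.symm.trans ih
    · have hadj' : (G \ fromEdgeSet {s(x, y)}).Adj a c := by
        rw [sdiff_adj]
        refine ⟨hadj, fun hf => he ?_⟩
        rw [fromEdgeSet_adj] at hf
        simpa using hf.1
      exact hadj'.reachable.trans ih

lemma walk_delete_cases {T : SimpleGraph V} {x y : V} :
    ∀ {z w : V}, T.Walk z w →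
      (T \ fromEdgeSet {s(x, y)}).Reachable z w ∨
      ((T \ fromEdgeSet {s(x, y)}).Reachable z x ∧ (T \ fromEdgeSet {s(x, y)}).Reachable w y) ∨
      ((T \ fromEdgeSet {s(x, y)}).Reachable z y ∧ (T \ fromEdgeSet {s(x, y)}).Reachable w x) := by
  intro z w p
  induction p with
  | nil => exact Or.inl (Reachable.refl _)
  | @cons a c w hadj p ih =>
    by_cases he : s(a, c) = s(x, y)
    · rw [Sym2.eq_iff] at he
      rcases he with ⟨rfl, rfl⟩ | ⟨rfl, rfl⟩
      · rcases ih with h1 | ⟨h2, h2'⟩ | ⟨h3, h3'⟩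
        · exact Or.inr (Or.inl ⟨Reachable.refl _, h1.symm⟩)
        · exact Or.inr (Or.inl ⟨Reachable.refl _, h2'⟩)
        · exact Or.inl h3'.symm
      · rcases ih with h1 | ⟨h2, h2'⟩ | ⟨h3, h3'⟩
        · exact Or.inr (Or.inr ⟨Reachable.refl _, h1.symm⟩)
        · exact Or.inl h2'.symm
        · exact Or.inr (Or.inr ⟨Reachable.refl _, h3'⟩)
    · have hadj' : (T \ fromEdgeSet {s(x, y)}).Adj a c := by
        rw [sdiff_adj]
        refine ⟨hadj, fun hf => he ?_⟩
        rw [fromEdgeSet_adj] at hf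
        simpa using hf.1
      rcases ih with h1 | ⟨h2, h2'⟩ | ⟨h3, h3'⟩
      · exact Or.inl (hadj'.reachable.trans h1)
      · exact Or.inr (Or.inl ⟨hadj'.reachable.trans h2, h2'⟩)
      · exact Or.inr (Or.inr ⟨hadj'.reachable.trans h3, h3'⟩)

lemma cover_delete {T : SimpleGraph V} {x y z : V} (p : T.Walk z x) :
    (T \ fromEdgeSet {s(x, y)}).Reachable z x ∨ (T \ fromEdgeSet {s(x, y)}).Reachable z y := by
  rcases walk_delete_cases (x := x) (y := y) p with h1 | ⟨h2, h2'⟩ | ⟨h3, h3'⟩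
  · exact Or.inl h1
  · exact Or.inl h2
  · exact Or.inr h3

lemma exists_spanning_tree' [Fintype V] (G : SimpleGraph V) (hG : G.Connected) :
    ∃ T, T ≤ G ∧ T.Connected ∧ T.IsAcyclic := by
  classical
  have key : ∀ n (G : SimpleGraph V), G.edgeSet.ncard = n → G.Connected →
      ∃ T, T ≤ G ∧ T.Connected ∧ T.IsAcyclic := by
    intro n
    induction n using Nat.strong_induction_on with
    | _ n ih =>
      intro G hn hG
      by_cases hac : G.IsAcyclic
      · exact ⟨G, le_refl G, hG, hac⟩
      · rw [isAcyclic_iff_forall_edge_isBridge] at hac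
        push_neg at hac
        obtain ⟨e, he, hbr⟩ := hac
        revert he hbr
        induction e using Sym2.ind with
        | _ x y =>
          intro he hbr
          rw [isBridge_iff] at hbr
          push_neg at hbr
          have hadj : G.Adj x y := (G.mem_edgeSet).mp he
          have hxy : (G \ fromEdgeSet {s(x, y)}).Reachable x y := hbr
          have hconn : (G \ fromEdgeSet {s(x, y)}).Connected := by
            rw [connected_iff]
            exact ⟨fun u w => reachable_delete_of_reachable hxy (hG.preconnected u w), hG.nonempty⟩
          have hE : (G \ fromEdgeSet {s(x, y)}).edgeSet = G.edgeSet \ {s(x, y)} := by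
            simp [edgeSet_sdiff, edgeSet_fromEdgeSet, edgeSet_sdiff_sdiff_isDiag]
          have hlt : (G \ fromEdgeSet {s(x, y)}).edgeSet.ncard < n := by
            rw [hE, ← hn]
            exact Set.ncard_diff_singleton_lt_of_mem he (Set.toFinite _)
          obtain ⟨T, hT1, hT2, hT3⟩ := ih _ hlt _ rfl hconn
          exact ⟨T, hT1.trans sdiff_le, hT2, hT3⟩
  exact key _ G rfl hG

lemma one_le_degVec' [Fintype V] {G : SimpleGraph V} (hG : G.Connected)
    (hn : 2 ≤ Fintype.card V) (u : V) : 0 < (G.neighborSet u).ncard := by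
  have hne : (G.neighborSet u).Nonempty := by
    have : Nontrivial V := Fintype.one_lt_card_iff_nontrivial.mp (by omega)
    obtain ⟨w, hw⟩ := exists_ne u
    obtain ⟨p⟩ := hG.preconnected u w
    cases p with
    | nil => exact absurd rfl hw
    | cons h _ => exact ⟨_, h⟩
  exact (Set.ncard_pos (Set.toFinite _)).mpr hne

end AuxLemmas


set_option maxHeartbeats 1000000 in
theorem lambda_pos {V : Type*} [Fintype V] [DecidableEq V]
    (G : SimpleGraph V) (hG : G.Connected) (hn : 2 ≤ Fintype.card V) (v : V) :
    0 < -3 * (degVec G ⬝ᵥ (forestMatrix G).mulVec (degVec G))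
        + 12 * edgeCount G * (degVec G ⬝ᵥ (forestMatrix G).mulVec (Pi.single v 1))
        + 8 * edgeCount G ^ 2 * (spanningTreeCount G : ℝ)
        + 4 * edgeCount G * (spanningTreeCount G : ℝ)
        - 12 * (spanningTreeCount G : ℝ) := by
  classical
  haveI : Fintype {F : SimpleGraph V // TwoForest G F} := Fintype.ofFinite _
  set d : V → ℝ := degVec G with hd
  -- the degree vector is nonnegative
  have hd0 : ∀ i, 0 ≤ d i := fun i => Nat.cast_nonneg _
  -- entries of the forest matrix as sums over 2-forests
  have hS : ∀ i j, (twoForestCount G i j : ℝ) =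
      ∑ F : {F : SimpleGraph V // TwoForest G F}, (if F.1.Reachable i j then (0:ℝ) else 1) := by
    intro i j
    have e1 : {F : SimpleGraph V // IsTwoForestSep G F i j} ≃
        {F : {F : SimpleGraph V // TwoForest G F} // ¬ F.1.Reachable i j} :=
      (Equiv.subtypeEquivRight (fun F => isTwoForestSep_iff')).trans
        (Equiv.subtypeSubtypeEquivSubtypeInter (TwoForest G) (fun F => ¬ F.Reachable i j)).symm
    have h2 : twoForestCount G i j =
        Fintype.card {F : {F : SimpleGraph V // TwoForest G F} // ¬ F.1.Reachable i j} := by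
      rw [twoForestCount, Nat.card_congr e1, Nat.card_eq_fintype_card]
    rw [h2, Fintype.card_subtype, Finset.card_filter]
    push_cast
    apply Finset.sum_congr rfl
    intro F _
    by_cases h : F.1.Reachable i j <;> simp [h]
  -- the two degree-sum functionals
  set A : {F : SimpleGraph V // TwoForest G F} → ℝ :=
    fun F => ∑ i, if F.1.Reachable i v then d i else 0 with hA_def
  set B : {F : SimpleGraph V // TwoForest G F} → ℝ :=
    fun F => ∑ i, if F.1.Reachable i v then 0 else d i with hB_def
  -- handshake
  have hhs : ∑ i, d i = 2 * edgeCount G := by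
    letI : DecidableRel G.Adj := Classical.decRel _
    have h := G.sum_degrees_eq_twice_card_edges
    have h1 : ∀ i, d i = (G.degree i : ℝ) := by
      intro i
      rw [hd]
      rw [degVec]
      congr 1
      rw [degree, neighborFinset, Set.ncard_eq_toFinset_card']
    have h2 : edgeCount G = (G.edgeFinset.card : ℝ) := by
      rw [edgeCount]
      congr 1
      rw [edgeFinset, Set.ncard_eq_toFinset_card']
    simp only [h1, h2]
    exact_mod_cast h
  have hab : ∀ F : {F : SimpleGraph V // TwoForest G F}, A F + B F = 2 * edgeCount G := by
    intro F
    rw [hA_def, hB_def, ← hhs, ← Finset.sum_add_distrib]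
    apply Finset.sum_congr rfl
    intro i _
    by_cases h : F.1.Reachable i v <;> simp [h]
  -- the quadratic form
  have hA : degVec G ⬝ᵥ (forestMatrix G).mulVec (degVec G)
      = ∑ F : {F : SimpleGraph V // TwoForest G F}, (A F * B F + B F * A F) := by
    have step1 : degVec G ⬝ᵥ (forestMatrix G).mulVec (degVec G)
        = ∑ i, ∑ j, ∑ F : {F : SimpleGraph V // TwoForest G F},
            (if F.1.Reachable i j then (0:ℝ) else d i * d j) := by
      simp only [dotProduct, mulVec, forestMatrix, Matrix.of_apply]
      apply Finset.sum_congr rfl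
      intro i _
      rw [Finset.mul_sum]
      apply Finset.sum_congr rfl
      intro j _
      rw [hS i j, Finset.sum_mul, Finset.mul_sum]
      apply Finset.sum_congr rfl
      intro F _
      by_cases h : F.1.Reachable i j <;> simp [h, hd]
    rw [step1]
    rw [show (∑ i, ∑ j, ∑ F : {F : SimpleGraph V // TwoForest G F},
          (if F.1.Reachable i j then (0:ℝ) else d i * d j))
        = ∑ F : {F : SimpleGraph V // TwoForest G F}, ∑ i, ∑ j,
            (if F.1.Reachable i j then (0:ℝ) else d i * d j) from by
      have swap1 : ∀ i : V, (∑ j, ∑ F : {F : SimpleGraph V // TwoForest G F},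
          (if F.1.Reachable i j then (0:ℝ) else d i * d j))
          = ∑ F : {F : SimpleGraph V // TwoForest G F}, ∑ j,
              (if F.1.Reachable i j then (0:ℝ) else d i * d j) := fun i => Finset.sum_comm
      simp only [swap1]
      rw [Finset.sum_comm]]
    apply Finset.sum_congr rfl
    intro F _
    have hcls := fun i j => F.2.reachable_iff' i j v
    have hrow : ∀ i, (∑ j, if F.1.Reachable i j then (0:ℝ) else d i * d j)
        = if F.1.Reachable i v then d i * B F else d i * A F := by
      intro i
      by_cases hiv : F.1.Reachable i v
      · rw [if_pos hiv, hB_def]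
        rw [Finset.mul_sum]
        apply Finset.sum_congr rfl
        intro j _
        have hiff : F.1.Reachable i j ↔ F.1.Reachable j v := by
          rw [hcls i j]
          simp [hiv]
        rw [if_congr hiff rfl rfl]
        by_cases h : F.1.Reachable j v <;> simp [h]
      · rw [if_neg hiv, hA_def]
        rw [Finset.mul_sum]
        apply Finset.sum_congr rfl
        intro j _
        have hiff : F.1.Reachable i j ↔ ¬ F.1.Reachable j v := by
          rw [hcls i j]
          simp [hiv]
        rw [if_congr hiff rfl rfl, ite_not]
        by_cases h : F.1.Reachable j v <;> simp [h]
    simp only [hrow]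
    have : ∀ i, (if F.1.Reachable i v then d i * B F else d i * A F)
        = (if F.1.Reachable i v then d i else 0) * B F
          + (if F.1.Reachable i v then 0 else d i) * A F := by
      intro i
      by_cases h : F.1.Reachable i v <;> simp [h]
    simp only [this]
    rw [Finset.sum_add_distrib, ← Finset.sum_mul, ← Finset.sum_mul]
  -- the linear form
  have hB : degVec G ⬝ᵥ (forestMatrix G).mulVec (Pi.single v 1)
      = ∑ F : {F : SimpleGraph V // TwoForest G F}, B F := by
    have h1 : ∀ i, ((forestMatrix G).mulVec (Pi.single v 1)) i = (twoForestCount G i v : ℝ) := by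
      intro i
      simp only [mulVec, dotProduct]
      rw [Finset.sum_eq_single v]
      · simp [forestMatrix]
      · intro j _ hj
        simp [Pi.single_eq_of_ne hj]
      · intro h
        exact absurd (Finset.mem_univ v) h
    simp only [dotProduct, h1, hS]
    rw [show (∑ i, d i * ∑ F : {F : SimpleGraph V // TwoForest G F},
          (if F.1.Reachable i v then (0:ℝ) else 1))
        = ∑ F : {F : SimpleGraph V // TwoForest G F}, ∑ i,
            d i * (if F.1.Reachable i v then (0:ℝ) else 1) from by
      simp only [Finset.mul_sum]
      rw [Finset.sum_comm]]
    apply Finset.sum_congr rfl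
    intro F _
    rw [hB_def]
    apply Finset.sum_congr rfl
    intro i _
    by_cases h : F.1.Reachable i v <;> simp [h]
  -- spanning tree and its properties
  obtain ⟨T, hTle, hTconn, hTac⟩ := exists_spanning_tree' G hG
  have hτ1 : (1:ℝ) ≤ (spanningTreeCount G : ℝ) := by
    haveI : Nonempty {T : SimpleGraph V // IsSpanningTree G T} := ⟨⟨T, hTle, hTconn, hTac⟩⟩
    have h0 : 0 < spanningTreeCount G := Nat.card_pos
    exact_mod_cast h0
  -- T has an edge
  obtain ⟨x, y, hxy⟩ : ∃ x y, T.Adj x y := by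
    have : Nontrivial V := Fintype.one_lt_card_iff_nontrivial.mp (by omega)
    obtain ⟨u, w, huw⟩ := exists_pair_ne V
    obtain ⟨p⟩ := hTconn.preconnected u w
    cases p with
    | nil => exact absurd rfl huw
    | cons h _ => exact ⟨_, _, h⟩
  have hm1 : (1:ℝ) ≤ edgeCount G := by
    have hmem : s(x, y) ∈ G.edgeSet := (G.mem_edgeSet).mpr (hTle hxy)
    have h0 : 0 < G.edgeSet.ncard := (Set.ncard_pos (Set.toFinite _)).mpr ⟨_, hmem⟩
    rw [edgeCount]
    exact_mod_cast h0
  -- the distinguished 2-forest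
  have hF0 : TwoForest G (T \ fromEdgeSet {s(x, y)}) := by
    refine ⟨sdiff_le.trans hTle, acyclic_anti sdiff_le hTac, x, y, ?_, ?_⟩
    · have hbr := isAcyclic_iff_forall_edge_isBridge.mp hTac ((T.mem_edgeSet).mpr hxy)
      exact isBridge_iff.mp hbr
    · intro z
      obtain ⟨p⟩ := hTconn.preconnected z x
      exact cover_delete p
  have hnrxy : ¬ (T \ fromEdgeSet {s(x, y)}).Reachable x y := by
    have hbr := isAcyclic_iff_forall_edge_isBridge.mp hTac ((T.mem_edgeSet).mpr hxy)
    exact isBridge_iff.mp hbr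
  -- some vertex in the part avoiding v
  set F0 : {F : SimpleGraph V // TwoForest G F} := ⟨T \ fromEdgeSet {s(x, y)}, hF0⟩ with hF0def
  obtain ⟨u, hunr⟩ : ∃ u, ¬ F0.1.Reachable u v := by
    by_cases hxv : F0.1.Reachable x v
    · exact ⟨y, fun h => hnrxy (hxv.trans h.symm)⟩
    · exact ⟨x, hxv⟩
  clear_value F0
  have hdu : (1:ℝ) ≤ d u := by
    have := one_le_degVec' hG hn u
    rw [hd, degVec]
    exact_mod_cast this
  have hB1 : (1:ℝ) ≤ B F0 := by
    have hle : (if F0.1.Reachable u v then (0:ℝ) else d u)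
        ≤ ∑ i, if F0.1.Reachable i v then (0:ℝ) else d i :=
      Finset.single_le_sum
        (f := fun i => if F0.1.Reachable i v then (0:ℝ) else d i)
        (fun i _ => by by_cases h : F0.1.Reachable i v <;> simp [h, hd0 i])
        (Finset.mem_univ u)
    rw [if_neg hunr] at hle
    have hBeq : B F0 = ∑ i, if F0.1.Reachable i v then (0:ℝ) else d i := by
      rw [hB_def]
    rw [hBeq]
    exact hdu.trans hle
  -- put everything together
  rw [hA, hB]
  have key : -3 * (∑ F : {F : SimpleGraph V // TwoForest G F}, (A F * B F + B F * A F))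
      + 12 * edgeCount G * (∑ F : {F : SimpleGraph V // TwoForest G F}, B F)
      = ∑ F : {F : SimpleGraph V // TwoForest G F}, 6 * B F ^ 2 := by
    rw [Finset.mul_sum, Finset.mul_sum, ← Finset.sum_add_distrib]
    apply Finset.sum_congr rfl
    intro F _
    linear_combination (-6 * B F) * hab F
  have hsum6 : (6:ℝ) ≤ ∑ F : {F : SimpleGraph V // TwoForest G F}, 6 * B F ^ 2 := by
    have h1 : (6:ℝ) ≤ 6 * B F0 ^ 2 := by nlinarith [hB1]
    refine h1.trans ?_
    exact Finset.single_le_sum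
      (f := fun F : {F : SimpleGraph V // TwoForest G F} => 6 * B F ^ 2)
      (fun F _ => by positivity)
      (Finset.mem_univ F0)
  have hτterm : 0 ≤ 8 * edgeCount G ^ 2 * (spanningTreeCount G : ℝ)
      + 4 * edgeCount G * (spanningTreeCount G : ℝ) - 12 * (spanningTreeCount G : ℝ) := by
    have h8 : (0:ℝ) ≤ 8 * edgeCount G ^ 2 + 4 * edgeCount G - 12 := by nlinarith [hm1]
    have h9 : (0:ℝ) ≤ (8 * edgeCount G ^ 2 + 4 * edgeCount G - 12) * (spanningTreeCount G : ℝ) :=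
      mul_nonneg h8 (by linarith)
    nlinarith [h9]
  linarith [key, hsum6, hτterm]
end

section
/- Let G be a connected graph on n vertices with 2-forest matrix S and τ spanning trees, and let G̃_v be obtained by attaching two pendant vertices a, b at v. Then the 2-forest matrix S̃ of G̃_v satisfies: s̃_{ij} = s_{ij} for i,j ∈ V(G); s̃_{aa} = s̃_{bb} = 0; s̃_{ab} = 2τ; and s̃_{aj} = s̃_{bj} = τ + s_{vj} for j ∈ V(G). -/
open Matrix SimpleGraph

section Aux

variable {V : Type*}

/-- The graph on `V ⊕ Fin 2` consisting of `F₀` on the `inl` copy plus the pendant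
edges `inl v — inr c` for those `c` with `s c`. -/
def pext (F₀ : SimpleGraph V) (v : V) (s : Fin 2 → Prop) : SimpleGraph (V ⊕ Fin 2) where
  Adj u w :=
    (∃ x y, u = Sum.inl x ∧ w = Sum.inl y ∧ F₀.Adj x y) ∨
    (∃ c, s c ∧ ((u = Sum.inl v ∧ w = Sum.inr c) ∨ (u = Sum.inr c ∧ w = Sum.inl v)))
  symm := by
    constructor
    rintro u w (⟨x, y, rfl, rfl, h⟩ | ⟨c, hc, (⟨rfl, rfl⟩ | ⟨rfl, rfl⟩)⟩)
    · exact Or.inl ⟨y, x, rfl, rfl, h.symm⟩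
    · exact Or.inr ⟨c, hc, Or.inr ⟨rfl, rfl⟩⟩
    · exact Or.inr ⟨c, hc, Or.inl ⟨rfl, rfl⟩⟩
  loopless := by
    constructor
    rintro u (⟨x, y, rfl, h2, hadj⟩ | ⟨c, hc, (⟨rfl, h2⟩ | ⟨rfl, h2⟩)⟩)
    · exact hadj.ne (Sum.inl.inj h2)
    · simp at h2
    · simp at h2

variable {F₀ : SimpleGraph V} {v : V} {s : Fin 2 → Prop}

lemma pext_adj_iff {u w : V ⊕ Fin 2} :
    (pext F₀ v s).Adj u w ↔
    (∃ x y, u = Sum.inl x ∧ w = Sum.inl y ∧ F₀.Adj x y) ∨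
    (∃ c, s c ∧ ((u = Sum.inl v ∧ w = Sum.inr c) ∨ (u = Sum.inr c ∧ w = Sum.inl v))) :=
  Iff.rfl

@[simp] lemma pext_adj_inl_inl {x y : V} :
    (pext F₀ v s).Adj (Sum.inl x) (Sum.inl y) ↔ F₀.Adj x y := by
  rw [pext_adj_iff]; simp

@[simp] lemma pext_adj_inl_inr {x : V} {c : Fin 2} :
    (pext F₀ v s).Adj (Sum.inl x) (Sum.inr c) ↔ x = v ∧ s c := by
  rw [pext_adj_iff]; aesop

@[simp] lemma pext_adj_inr_inl {x : V} {c : Fin 2} :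
    (pext F₀ v s).Adj (Sum.inr c) (Sum.inl x) ↔ x = v ∧ s c := by
  rw [pext_adj_iff]; constructor
  · aesop
  · rintro ⟨rfl, h⟩; exact Or.inr ⟨c, h, Or.inr ⟨rfl, rfl⟩⟩

@[simp] lemma pext_adj_inr_inr {c d : Fin 2} :
    (pext F₀ v s).Adj (Sum.inr c) (Sum.inr d) ↔ False := by
  rw [pext_adj_iff]; simp

lemma pext_congr {s' : Fin 2 → Prop} (h : ∀ c, s c ↔ s' c) :
    pext F₀ v s = pext F₀ v s' := by
  have : s = s' := funext fun c => propext (h c)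
  rw [this]

@[simp] lemma comap_pext : (pext F₀ v s).comap Sum.inl = F₀ := by
  ext x y; simp

/-- The reachability relation of `pext F₀ v s`, described explicitly. -/
def prel (F₀ : SimpleGraph V) (v : V) (s : Fin 2 → Prop) :
    (V ⊕ Fin 2) → (V ⊕ Fin 2) → Prop
  | .inl x, .inl y => F₀.Reachable x y
  | .inl x, .inr c => s c ∧ F₀.Reachable x v
  | .inr c, .inl y => s c ∧ F₀.Reachable v y
  | .inr c, .inr d => c = d ∨ (s c ∧ s d)

@[simp] lemma prel_inl_inl {x y : V} :
    prel F₀ v s (Sum.inl x) (Sum.inl y) ↔ F₀.Reachable x y := Iff.rfl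
@[simp] lemma prel_inl_inr {x : V} {c : Fin 2} :
    prel F₀ v s (Sum.inl x) (Sum.inr c) ↔ s c ∧ F₀.Reachable x v := Iff.rfl
@[simp] lemma prel_inr_inl {y : V} {c : Fin 2} :
    prel F₀ v s (Sum.inr c) (Sum.inl y) ↔ s c ∧ F₀.Reachable v y := Iff.rfl
@[simp] lemma prel_inr_inr {c d : Fin 2} :
    prel F₀ v s (Sum.inr c) (Sum.inr d) ↔ c = d ∨ (s c ∧ s d) := Iff.rfl

lemma prel_refl : ∀ u, prel F₀ v s u u := by
  rintro (x | c)
  · exact Reachable.refl x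
  · exact Or.inl rfl

lemma prel_trans : ∀ {u w z}, prel F₀ v s u w → prel F₀ v s w z → prel F₀ v s u z := by
  rintro (x | c) (y | d) (z' | e) h1 h2 <;> simp only [prel] at h1 h2 ⊢
  · exact h1.trans h2
  · exact ⟨h2.1, h1.trans h2.2⟩
  · exact h1.2.trans h2.2
  · rcases h2 with rfl | h2
    · exact ⟨h1.1, h1.2⟩
    · exact ⟨h2.2, h1.2⟩
  · exact ⟨h1.1, h1.2.trans h2⟩
  · exact Or.inr ⟨h1.1, h2.1⟩
  · rcases h1 with rfl | h1
    · exact ⟨h2.1, h2.2⟩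
    · exact ⟨h1.1, h2.2⟩
  · rcases h1 with rfl | h1
    · exact h2
    · rcases h2 with rfl | h2
      · exact Or.inr h1
      · exact Or.inr ⟨h1.1, h2.2⟩

lemma adj_prel {u w : V ⊕ Fin 2} (h : (pext F₀ v s).Adj u w) : prel F₀ v s u w := by
  rw [pext_adj_iff] at h
  rcases h with ⟨x, y, rfl, rfl, h⟩ | ⟨c, hc, (⟨rfl, rfl⟩ | ⟨rfl, rfl⟩)⟩
  · exact h.reachable
  · exact ⟨hc, Reachable.refl v⟩
  · exact ⟨hc, Reachable.refl v⟩

/-- The embedding hom from `F₀` to `pext F₀ v s`. -/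
def pextHom (F₀ : SimpleGraph V) (v : V) (s : Fin 2 → Prop) : F₀ →g pext F₀ v s :=
  ⟨Sum.inl, fun h => Or.inl ⟨_, _, rfl, rfl, h⟩⟩

lemma pext_reachable_iff {u w : V ⊕ Fin 2} :
    (pext F₀ v s).Reachable u w ↔ prel F₀ v s u w := by
  constructor
  · rintro ⟨p⟩
    induction p with
    | nil => exact prel_refl _
    | cons h _ ih => exact prel_trans (adj_prel h) ih
  · intro h
    match u, w with
    | .inl x, .inl y => exact h.map (pextHom F₀ v s)
    | .inl x, .inr c =>
        exact (Reachable.map (pextHom F₀ v s) h.2).trans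
          (SimpleGraph.Adj.reachable (pext_adj_inl_inr.mpr ⟨rfl, h.1⟩))
    | .inr c, .inl y =>
        exact (SimpleGraph.Adj.reachable (pext_adj_inr_inl.mpr ⟨rfl, h.1⟩)).trans
          (Reachable.map (pextHom F₀ v s) h.2)
    | .inr c, .inr d =>
        rcases h with rfl | ⟨hc, hd⟩
        · exact Reachable.refl _
        · exact (SimpleGraph.Adj.reachable (pext_adj_inr_inl.mpr ⟨rfl, hc⟩)).trans
            (SimpleGraph.Adj.reachable (pext_adj_inl_inr.mpr ⟨rfl, hd⟩))

end Aux
section Aux2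

variable {V : Type*} {G F₀ : SimpleGraph V} {v : V} {s : Fin 2 → Prop}

@[simp] lemma tilde_adj_inl_inl {x y : V} :
    (tildeG G v).Adj (Sum.inl x) (Sum.inl y) ↔ G.Adj x y := by
  simp only [tildeG, fromRel_adj]
  constructor
  · rintro ⟨hne, h | h⟩
    · rcases h with ⟨a, b, ha, hb, hadj⟩ | ⟨_, c, hc⟩
      · obtain rfl := Sum.inl.inj ha; obtain rfl := Sum.inl.inj hb; exact hadj
      · simp at hc
    · rcases h with ⟨a, b, ha, hb, hadj⟩ | ⟨_, c, hc⟩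
      · obtain rfl := Sum.inl.inj ha; obtain rfl := Sum.inl.inj hb; exact hadj.symm
      · simp at hc
  · intro h; exact ⟨by simpa using h.ne, Or.inl (Or.inl ⟨x, y, rfl, rfl, h⟩)⟩

@[simp] lemma tilde_adj_inl_inr {x : V} {c : Fin 2} :
    (tildeG G v).Adj (Sum.inl x) (Sum.inr c) ↔ x = v := by
  simp only [tildeG, fromRel_adj]
  constructor
  · rintro ⟨hne, h | h⟩ <;> aesop
  · rintro rfl; exact ⟨by simp, Or.inl (Or.inr ⟨rfl, c, rfl⟩)⟩

@[simp] lemma tilde_adj_inr_inl {x : V} {c : Fin 2} :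
    (tildeG G v).Adj (Sum.inr c) (Sum.inl x) ↔ x = v := by
  rw [adj_comm]; exact tilde_adj_inl_inr

@[simp] lemma tilde_adj_inr_inr {c d : Fin 2} :
    (tildeG G v).Adj (Sum.inr c) (Sum.inr d) ↔ False := by
  simp only [tildeG, fromRel_adj]
  constructor
  · rintro ⟨hne, h | h⟩ <;> aesop
  · exact False.elim

lemma pext_le_tilde_iff : pext F₀ v s ≤ tildeG G v ↔ F₀ ≤ G := by
  constructor
  · intro h x y hxy
    have := h (pext_adj_inl_inl.mpr hxy)
    rwa [tilde_adj_inl_inl] at this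
  · intro h u w hadj
    rw [pext_adj_iff] at hadj
    rcases hadj with ⟨x, y, rfl, rfl, hxy⟩ | ⟨c, hc, (⟨rfl, rfl⟩ | ⟨rfl, rfl⟩)⟩
    · exact tilde_adj_inl_inl.mpr (h hxy)
    · exact tilde_adj_inl_inr.mpr rfl
    · exact tilde_adj_inr_inl.mpr rfl

lemma eq_pext_of_le_tilde {F : SimpleGraph (V ⊕ Fin 2)} (hF : F ≤ tildeG G v) :
    F = pext (F.comap Sum.inl) v (fun c => F.Adj (Sum.inl v) (Sum.inr c)) := by
  ext u w
  rcases u with x | c <;> rcases w with y | d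
  · simp [comap_adj]
  · rw [pext_adj_inl_inr]
    constructor
    · intro h
      have hx : x = v := tilde_adj_inl_inr.mp (hF h)
      subst hx; exact ⟨rfl, h⟩
    · rintro ⟨rfl, h⟩; exact h
  · rw [pext_adj_inr_inl]
    constructor
    · intro h
      have hx : y = v := tilde_adj_inr_inl.mp (hF h)
      subst hx; exact ⟨rfl, h.symm⟩
    · rintro ⟨rfl, h⟩; exact h.symm
  · rw [pext_adj_inr_inr]
    exact iff_false_intro (fun h => tilde_adj_inr_inr.mp (hF h))

lemma pext_sdiff_inl (x y : V) :
    (pext F₀ v s) \ SimpleGraph.fromEdgeSet {s(Sum.inl x, Sum.inl y)}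
      = pext (F₀ \ SimpleGraph.fromEdgeSet {s(x, y)}) v s := by
  ext u w
  rcases u with a | c <;> rcases w with b | d <;>
    simp [sdiff_adj, fromEdgeSet_adj, Sym2.eq_iff] <;> aesop

lemma pext_sdiff_pendant (c : Fin 2) :
    (pext F₀ v s) \ SimpleGraph.fromEdgeSet {s(Sum.inl v, Sum.inr c)}
      = pext F₀ v (fun d => s d ∧ d ≠ c) := by
  ext u w
  rcases u with a | e <;> rcases w with b | d <;>
    simp [sdiff_adj, fromEdgeSet_adj, Sym2.eq_iff] <;> aesop

lemma pext_isAcyclic_iff : (pext F₀ v s).IsAcyclic ↔ F₀.IsAcyclic := by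
  rw [isAcyclic_iff_forall_adj_isBridge, isAcyclic_iff_forall_adj_isBridge]
  constructor
  · intro h x y hxy
    have hb := h (pext_adj_inl_inl.mpr hxy)
    rw [isBridge_iff, deleteEdges, pext_sdiff_inl] at hb
    refine isBridge_iff.mpr fun hr => hb ?_
    exact pext_reachable_iff.mpr hr
  · intro h u w hadj
    have hadj' := hadj
    rw [pext_adj_iff] at hadj'
    rcases hadj' with ⟨x, y, rfl, rfl, hxy⟩ | ⟨c, hc, (⟨rfl, rfl⟩ | ⟨rfl, rfl⟩)⟩
    · have hb := h hxy
      rw [isBridge_iff] at hb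
      rw [isBridge_iff, deleteEdges, pext_sdiff_inl]
      exact fun hr => hb (pext_reachable_iff.mp hr)
    · rw [isBridge_iff, deleteEdges, pext_sdiff_pendant]
      refine fun hr => ?_
      exact ((pext_reachable_iff.mp hr) : _ ∧ _).1.2 rfl
    · rw [isBridge_iff, Sym2.eq_swap, deleteEdges, pext_sdiff_pendant]
      refine fun hr => ?_
      exact ((pext_reachable_iff.mp hr) : _ ∧ _).1.2 rfl

lemma sep_pext_iff {p q : V ⊕ Fin 2} :
    IsTwoForestSep (tildeG G v) (pext F₀ v s) p q ↔
      F₀ ≤ G ∧ F₀.IsAcyclic ∧ ¬ prel F₀ v s p q ∧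
        ∀ u, prel F₀ v s u p ∨ prel F₀ v s u q := by
  unfold IsTwoForestSep
  rw [pext_le_tilde_iff, pext_isAcyclic_iff]
  simp only [pext_reachable_iff]

end Aux2
section Aux3

variable {V : Type*} {G : SimpleGraph V} {v : V}

private lemma fin2_cases (c : Fin 2) : c = 0 ∨ c = 1 := by fin_cases c <;> simp

private lemma fin2_ne (a b : Fin 2) (h : a ≠ b) : a = 0 ∧ b = 1 ∨ a = 1 ∧ b = 0 := by
  revert h; revert a b; decide

/-! ### Part 1 -/

lemma part1_to {F : SimpleGraph (V ⊕ Fin 2)} {i j : V}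
    (hF : IsTwoForestSep (tildeG G v) F (Sum.inl i) (Sum.inl j)) :
    IsTwoForestSep G (F.comap Sum.inl) i j := by
  have hE := eq_pext_of_le_tilde hF.1
  rw [hE, sep_pext_iff] at hF
  obtain ⟨h1, h2, h3, h4⟩ := hF
  exact ⟨h1, h2, h3, fun x => h4 (Sum.inl x)⟩

lemma part1_from {F₀ : SimpleGraph V} {i j : V} (hF₀ : IsTwoForestSep G F₀ i j) :
    IsTwoForestSep (tildeG G v) (pext F₀ v (fun _ => True)) (Sum.inl i) (Sum.inl j) := by
  rw [sep_pext_iff]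
  obtain ⟨h1, h2, h3, h4⟩ := hF₀
  refine ⟨h1, h2, h3, ?_⟩
  rintro (x | c)
  · exact h4 x
  · rcases h4 v with h | h
    · exact Or.inl ⟨trivial, h⟩
    · exact Or.inr ⟨trivial, h⟩

lemma part1_left {F : SimpleGraph (V ⊕ Fin 2)} {i j : V}
    (hF : IsTwoForestSep (tildeG G v) F (Sum.inl i) (Sum.inl j)) :
    pext (F.comap Sum.inl) v (fun _ => True) = F := by
  have hE := eq_pext_of_le_tilde hF.1
  rw [hE, sep_pext_iff] at hF
  refine Eq.trans (pext_congr fun c => ⟨fun _ => ?_, fun _ => trivial⟩) hE.symm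
  rcases hF.2.2.2 (Sum.inr c) with h | h
  · exact h.1
  · exact h.1

def equiv1 (G : SimpleGraph V) (v : V) (i j : V) :
    {F : SimpleGraph (V ⊕ Fin 2) // IsTwoForestSep (tildeG G v) F (Sum.inl i) (Sum.inl j)} ≃
      {F₀ : SimpleGraph V // IsTwoForestSep G F₀ i j} where
  toFun F := ⟨F.1.comap Sum.inl, part1_to F.2⟩
  invFun F₀ := ⟨pext F₀.1 v (fun _ => True), part1_from F₀.2⟩
  left_inv F := Subtype.ext (part1_left F.2)
  right_inv F₀ := Subtype.ext comap_pext

/-! ### Part 3 -/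

lemma part3_to {F : SimpleGraph (V ⊕ Fin 2)} (hN : Nonempty V)
    (hF : IsTwoForestSep (tildeG G v) F (Sum.inr 0) (Sum.inr 1)) (c : Fin 2)
    (hc : F.Adj (Sum.inl v) (Sum.inr c)) :
    IsSpanningTree G (F.comap Sum.inl) ∧ ∀ d, F.Adj (Sum.inl v) (Sum.inr d) ↔ d = c := by
  have hE := eq_pext_of_le_tilde hF.1
  rw [hE, sep_pext_iff] at hF
  obtain ⟨h1, h2, h3, h4⟩ := hF
  have hns : ¬ (F.Adj (Sum.inl v) (Sum.inr 0) ∧ F.Adj (Sum.inl v) (Sum.inr 1)) := by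
    intro hh
    exact h3 (Or.inr hh)
  have hreach : ∀ x : V, (F.comap Sum.inl).Reachable x v := by
    intro x
    rcases h4 (Sum.inl x) with h | h
    · exact h.2
    · exact h.2
  refine ⟨⟨h1, (connected_iff _).mpr ⟨fun x y => (hreach x).trans (hreach y).symm, hN⟩, h2⟩, ?_⟩
  intro d
  constructor
  · intro hd
    by_contra hdc
    rcases fin2_ne d c hdc with ⟨rfl, rfl⟩ | ⟨rfl, rfl⟩
    · exact hns ⟨hd, hc⟩
    · exact hns ⟨hc, hd⟩
  · rintro rfl; exact hc

lemma part3_exists {F : SimpleGraph (V ⊕ Fin 2)} (hN : Nonempty V)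
    (hF : IsTwoForestSep (tildeG G v) F (Sum.inr 0) (Sum.inr 1)) :
    F.Adj (Sum.inl v) (Sum.inr 0) ∨ F.Adj (Sum.inl v) (Sum.inr 1) := by
  have hE := eq_pext_of_le_tilde hF.1
  rw [hE, sep_pext_iff] at hF
  obtain ⟨x⟩ := hN
  rcases hF.2.2.2 (Sum.inl x) with h | h
  · exact Or.inl h.1
  · exact Or.inr h.1

lemma part3_from (c : Fin 2) {T : SimpleGraph V} (hT : IsSpanningTree G T) :
    IsTwoForestSep (tildeG G v) (pext T v (fun d => d = c)) (Sum.inr 0) (Sum.inr 1) := by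
  rw [sep_pext_iff]
  obtain ⟨h1, hconn, h3⟩ := hT
  refine ⟨h1, h3, ?_, ?_⟩
  · rintro (h | ⟨hc0, hc1⟩)
    · exact absurd h (by decide)
    · exact absurd (hc0.trans hc1.symm) (by decide)
  · rintro (x | d)
    · have hr : T.Reachable x v := hconn.preconnected x v
      rcases fin2_cases c with rfl | rfl
      · exact Or.inl ⟨rfl, hr⟩
      · exact Or.inr ⟨rfl, hr⟩
    · rcases fin2_cases d with rfl | rfl
      · exact Or.inl (Or.inl rfl)
      · exact Or.inr (Or.inl rfl)

lemma part3_left {F : SimpleGraph (V ⊕ Fin 2)} (hN : Nonempty V)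
    (hF : IsTwoForestSep (tildeG G v) F (Sum.inr 0) (Sum.inr 1)) (c : Fin 2)
    (hc : F.Adj (Sum.inl v) (Sum.inr c)) :
    pext (F.comap Sum.inl) v (fun d => d = c) = F := by
  have hE := eq_pext_of_le_tilde hF.1
  exact Eq.trans (pext_congr fun d => ((part3_to hN hF c hc).2 d).symm) hE.symm

open Classical in
noncomputable def equiv3 (G : SimpleGraph V) (v : V) (hN : Nonempty V) :
    {F : SimpleGraph (V ⊕ Fin 2) // IsTwoForestSep (tildeG G v) F (Sum.inr 0) (Sum.inr 1)} ≃
      {T : SimpleGraph V // IsSpanningTree G T} ⊕ {T : SimpleGraph V // IsSpanningTree G T} where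
  toFun F :=
    if h : F.1.Adj (Sum.inl v) (Sum.inr 0) then
      Sum.inl ⟨F.1.comap Sum.inl, (part3_to hN F.2 0 h).1⟩
    else
      Sum.inr ⟨F.1.comap Sum.inl,
        (part3_to hN F.2 1 ((part3_exists hN F.2).resolve_left h)).1⟩
  invFun := fun
    | Sum.inl T => ⟨pext T.1 v (fun d => d = 0), part3_from 0 T.2⟩
    | Sum.inr T => ⟨pext T.1 v (fun d => d = 1), part3_from 1 T.2⟩
  left_inv F := by
    by_cases h : F.1.Adj (Sum.inl v) (Sum.inr 0)
    · simp only [dif_pos h]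
      exact Subtype.ext (part3_left hN F.2 0 h)
    · simp only [dif_neg h]
      exact Subtype.ext (part3_left hN F.2 1 ((part3_exists hN F.2).resolve_left h))
  right_inv := by
    rintro (T | T)
    · have h : (pext T.1 v (fun d => d = 0)).Adj (Sum.inl v) (Sum.inr 0) :=
        pext_adj_inl_inr.mpr ⟨rfl, rfl⟩
      simp only [dif_pos h]
      exact congrArg Sum.inl (Subtype.ext comap_pext)
    · have h : ¬ (pext T.1 v (fun d => d = 1)).Adj (Sum.inl v) (Sum.inr 0) := by
        rw [pext_adj_inl_inr]; rintro ⟨-, h⟩; exact absurd h (by decide)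
      simp only [dif_neg h]
      exact congrArg Sum.inr (Subtype.ext comap_pext)

/-! ### Part 4 -/

lemma part4_to_forest {F : SimpleGraph (V ⊕ Fin 2)} {c : Fin 2} {j : V}
    (hF : IsTwoForestSep (tildeG G v) F (Sum.inr c) (Sum.inl j))
    (h : F.Adj (Sum.inl v) (Sum.inr c)) :
    IsTwoForestSep G (F.comap Sum.inl) v j ∧ ∀ d, F.Adj (Sum.inl v) (Sum.inr d) := by
  have hE := eq_pext_of_le_tilde hF.1
  rw [hE, sep_pext_iff] at hF
  obtain ⟨h1, h2, h3, h4⟩ := hF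
  have hnr : ¬ (F.comap Sum.inl).Reachable v j := fun hr => h3 ⟨h, hr⟩
  refine ⟨⟨h1, h2, hnr, fun x => ?_⟩, fun d => ?_⟩
  · rcases h4 (Sum.inl x) with hh | hh
    · exact Or.inl hh.2
    · exact Or.inr hh
  · rcases h4 (Sum.inr d) with hh | hh
    · rcases hh with rfl | hh
      · exact h
      · exact hh.1
    · exact hh.1

lemma part4_to_tree {F : SimpleGraph (V ⊕ Fin 2)} {c : Fin 2} {j : V} (hN : Nonempty V)
    (hF : IsTwoForestSep (tildeG G v) F (Sum.inr c) (Sum.inl j))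
    (h : ¬ F.Adj (Sum.inl v) (Sum.inr c)) :
    IsSpanningTree G (F.comap Sum.inl) ∧ ∀ d, F.Adj (Sum.inl v) (Sum.inr d) ↔ d ≠ c := by
  have hE := eq_pext_of_le_tilde hF.1
  rw [hE, sep_pext_iff] at hF
  obtain ⟨h1, h2, h3, h4⟩ := hF
  have hreach : ∀ x : V, (F.comap Sum.inl).Reachable x j := by
    intro x
    rcases h4 (Sum.inl x) with hh | hh
    · exact absurd hh.1 h
    · exact hh
  refine ⟨⟨h1, (connected_iff _).mpr ⟨fun x y => (hreach x).trans (hreach y).symm, hN⟩, h2⟩, ?_⟩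
  intro d
  constructor
  · intro hd
    rintro rfl
    exact h hd
  · intro hd
    rcases h4 (Sum.inr d) with hh | hh
    · rcases hh with rfl | hh
      · exact absurd rfl hd
      · exact absurd hh.2 h
    · exact hh.1

lemma part4_from_forest {F₀ : SimpleGraph V} {c : Fin 2} {j : V}
    (hF₀ : IsTwoForestSep G F₀ v j) :
    IsTwoForestSep (tildeG G v) (pext F₀ v (fun _ => True)) (Sum.inr c) (Sum.inl j) := by
  rw [sep_pext_iff]
  obtain ⟨h1, h2, h3, h4⟩ := hF₀
  refine ⟨h1, h2, fun hh => h3 hh.2, ?_⟩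
  rintro (x | d)
  · rcases h4 x with h | h
    · exact Or.inl ⟨trivial, h⟩
    · exact Or.inr h
  · exact Or.inl (Or.inr ⟨trivial, trivial⟩)

lemma part4_from_tree {T : SimpleGraph V} {c : Fin 2} {j : V} (hT : IsSpanningTree G T) :
    IsTwoForestSep (tildeG G v) (pext T v (fun d => d ≠ c)) (Sum.inr c) (Sum.inl j) := by
  rw [sep_pext_iff]
  obtain ⟨h1, hconn, h3⟩ := hT
  refine ⟨h1, h3, fun hh => hh.1 rfl, ?_⟩
  rintro (x | d)
  · exact Or.inr (hconn.preconnected x j)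
  · by_cases hd : d = c
    · exact Or.inl (Or.inl hd)
    · exact Or.inr ⟨hd, hconn.preconnected v j⟩

open Classical in
noncomputable def equiv4 (G : SimpleGraph V) (v : V) (hN : Nonempty V) (c : Fin 2) (j : V) :
    {F : SimpleGraph (V ⊕ Fin 2) // IsTwoForestSep (tildeG G v) F (Sum.inr c) (Sum.inl j)} ≃
      {T : SimpleGraph V // IsSpanningTree G T} ⊕ {F₀ : SimpleGraph V // IsTwoForestSep G F₀ v j} where
  toFun F :=
    if h : F.1.Adj (Sum.inl v) (Sum.inr c) then
      Sum.inr ⟨F.1.comap Sum.inl, (part4_to_forest F.2 h).1⟩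
    else
      Sum.inl ⟨F.1.comap Sum.inl, (part4_to_tree hN F.2 h).1⟩
  invFun := fun
    | Sum.inl T => ⟨pext T.1 v (fun d => d ≠ c), part4_from_tree T.2⟩
    | Sum.inr F₀ => ⟨pext F₀.1 v (fun _ => True), part4_from_forest F₀.2⟩
  left_inv F := by
    obtain ⟨F, hF⟩ := F
    have hE := eq_pext_of_le_tilde hF.1
    by_cases h : F.Adj (Sum.inl v) (Sum.inr c)
    · simp only [dif_pos h]
      refine Subtype.ext (Eq.trans (pext_congr fun d => ?_) hE.symm)
      exact ⟨fun _ => (part4_to_forest hF h).2 d, fun _ => trivial⟩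
    · simp only [dif_neg h]
      refine Subtype.ext (Eq.trans (pext_congr fun d => ?_) hE.symm)
      exact (((part4_to_tree hN hF h).2 d).symm)
  right_inv := by
    rintro (T | F₀)
    · have h : ¬ (pext T.1 v (fun d => d ≠ c)).Adj (Sum.inl v) (Sum.inr c) := by
        rw [pext_adj_inl_inr]; rintro ⟨-, h⟩; exact h rfl
      simp only [dif_neg h]
      exact congrArg Sum.inl (Subtype.ext comap_pext)
    · have h : (pext F₀.1 v (fun _ => True)).Adj (Sum.inl v) (Sum.inr c) :=
        pext_adj_inl_inr.mpr ⟨rfl, trivial⟩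
      simp only [dif_pos h]
      exact congrArg Sum.inr (Subtype.ext comap_pext)

end Aux3

theorem twoForest_tilde {V : Type*} [Fintype V] [DecidableEq V]
    (G : SimpleGraph V) (hG : G.Connected) (v : V) :
    (∀ i j : V, twoForestCount (tildeG G v) (Sum.inl i) (Sum.inl j)
        = twoForestCount G i j) ∧
    (∀ c : Fin 2, twoForestCount (tildeG G v) (Sum.inr c) (Sum.inr c) = 0) ∧
    twoForestCount (tildeG G v) (Sum.inr 0) (Sum.inr 1) = 2 * spanningTreeCount G ∧
    (∀ (c : Fin 2) (j : V), twoForestCount (tildeG G v) (Sum.inr c) (Sum.inl j)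
        = spanningTreeCount G + twoForestCount G v j) := by
  have hN := hG.nonempty
  refine ⟨fun i j => Nat.card_congr (equiv1 G v i j), fun c => ?_, ?_, fun c j => ?_⟩
  · haveI : IsEmpty {F : SimpleGraph (V ⊕ Fin 2) //
        IsTwoForestSep (tildeG G v) F (Sum.inr c) (Sum.inr c)} :=
      ⟨fun F => F.2.2.2.1 (Reachable.refl _)⟩
    exact Nat.card_of_isEmpty
  · calc twoForestCount (tildeG G v) (Sum.inr 0) (Sum.inr 1)
        = Nat.card ({T : SimpleGraph V // IsSpanningTree G T} ⊕
            {T : SimpleGraph V // IsSpanningTree G T}) := Nat.card_congr (equiv3 G v hN)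
      _ = spanningTreeCount G + spanningTreeCount G := Nat.card_sum
      _ = 2 * spanningTreeCount G := (two_mul _).symm
  · calc twoForestCount (tildeG G v) (Sum.inr c) (Sum.inl j)
        = Nat.card ({T : SimpleGraph V // IsSpanningTree G T} ⊕
            {F₀ : SimpleGraph V // IsTwoForestSep G F₀ v j}) :=
          Nat.card_congr (equiv4 G v hN c j)
      _ = spanningTreeCount G + twoForestCount G v j := Nat.card_sum
end

section
/- Let G be a connected graph with 2-forest matrix S and τ spanning trees, and let Ĝ_v be obtained by attaching vertices a, b adjacent to v and to each other. Then the 2-forest matrix Ŝ of Ĝ_v satisfies: ŝ_{ij} = 3s_{ij} for i,j ∈ V(G); ŝ_{aa} = ŝ_{bb} = 0; ŝ_{ab} = 2τ; and ŝ_{aj} = ŝ_{bj} = 3s_{vj} + 2τ for j ∈ V(G). -/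
open Matrix SimpleGraph

open Sum

section
variable {V : Type*} {G F₀ : SimpleGraph V} {v : V} {P0 P1 Pab : Prop}

@[simp] lemma hat_adj_inl_inl {p q : V} :
    (hatG G v).Adj (inl p) (inl q) ↔ G.Adj p q := by
  simp only [hatG, fromRel_adj]
  constructor
  · rintro ⟨hne, h | h⟩ <;> rcases h with ⟨a, b, ha, hb, hab⟩ | ⟨hv, c, hc⟩ | ⟨h0, h1⟩ <;>
      simp_all <;> exact hab.symm
  · intro h; exact ⟨by simp [h.ne], Or.inl (Or.inl ⟨p, q, rfl, rfl, h⟩)⟩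

@[simp] lemma hat_adj_inl_inr {p : V} {c : Fin 2} :
    (hatG G v).Adj (inl p) (inr c) ↔ p = v := by
  simp only [hatG, fromRel_adj]
  constructor
  · rintro ⟨hne, h | h⟩ <;> rcases h with ⟨a, b, ha, hb, hab⟩ | ⟨hv, d, hd⟩ | ⟨h0, h1⟩ <;>
      simp_all
  · rintro rfl; exact ⟨by simp, Or.inl (Or.inr (Or.inl ⟨rfl, c, rfl⟩))⟩

@[simp] lemma hat_adj_inr_inl {q : V} {c : Fin 2} :
    (hatG G v).Adj (inr c) (inl q) ↔ q = v := by
  rw [adj_comm]; exact hat_adj_inl_inr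

@[simp] lemma hat_adj_inr_inr {c d : Fin 2} :
    (hatG G v).Adj (inr c) (inr d) ↔ c ≠ d := by
  simp only [hatG, fromRel_adj]
  constructor
  · rintro ⟨hne, _⟩; simpa using hne
  · intro h
    refine ⟨by simpa using h, ?_⟩
    fin_cases c <;> fin_cases d <;> simp_all
end

section
variable {V : Type*} {G F₀ : SimpleGraph V} {v : V} {P0 P1 Pab : Prop}

/-- Build a subgraph of `hatG` from a graph on `V` plus three propositions
indicating presence of the triangle edges `va`, `vb`, `ab`. -/
def mkF (F₀ : SimpleGraph V) (v : V) (P0 P1 Pab : Prop) : SimpleGraph (V ⊕ Fin 2) where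
  Adj x y :=
    (∃ p q, x = inl p ∧ y = inl q ∧ F₀.Adj p q) ∨
    (P0 ∧ (x = inl v ∧ y = inr 0 ∨ x = inr 0 ∧ y = inl v)) ∨
    (P1 ∧ (x = inl v ∧ y = inr 1 ∨ x = inr 1 ∧ y = inl v)) ∨
    (Pab ∧ (x = inr 0 ∧ y = inr 1 ∨ x = inr 1 ∧ y = inr 0))
  symm := by
    constructor
    rintro x y (⟨p, q, rfl, rfl, h⟩ | ⟨h, h'⟩ | ⟨h, h'⟩ | ⟨h, h'⟩)
    · exact Or.inl ⟨q, p, rfl, rfl, h.symm⟩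
    · exact Or.inr (Or.inl ⟨h, by tauto⟩)
    · exact Or.inr (Or.inr (Or.inl ⟨h, by tauto⟩))
    · exact Or.inr (Or.inr (Or.inr ⟨h, by tauto⟩))
  loopless := by
    constructor
    rintro x (⟨p, q, rfl, hq, h⟩ | ⟨h, ⟨h1, h2⟩ | ⟨h1, h2⟩⟩ | ⟨h, ⟨h1, h2⟩ | ⟨h1, h2⟩⟩ |
      ⟨h, ⟨h1, h2⟩ | ⟨h1, h2⟩⟩) <;> simp_all

@[simp] lemma mkF_adj_inl_inl {p q : V} :
    (mkF F₀ v P0 P1 Pab).Adj (inl p) (inl q) ↔ F₀.Adj p q := by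
  simp [mkF]

@[simp] lemma mkF_adj_inl_inr {p : V} {c : Fin 2} :
    (mkF F₀ v P0 P1 Pab).Adj (inl p) (inr c) ↔ p = v ∧ ((c = 0 ∧ P0) ∨ (c = 1 ∧ P1)) := by
  simp only [mkF]
  constructor
  · rintro (⟨a, b, h, h', _⟩ | ⟨h, h'⟩ | ⟨h, h'⟩ | ⟨h, h'⟩) <;> simp_all <;> tauto
  · rintro ⟨rfl, ⟨rfl, h⟩ | ⟨rfl, h⟩⟩
    · exact Or.inr (Or.inl ⟨h, Or.inl ⟨rfl, rfl⟩⟩)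
    · exact Or.inr (Or.inr (Or.inl ⟨h, Or.inl ⟨rfl, rfl⟩⟩))

@[simp] lemma mkF_adj_inr_inl {q : V} {c : Fin 2} :
    (mkF F₀ v P0 P1 Pab).Adj (inr c) (inl q) ↔ q = v ∧ ((c = 0 ∧ P0) ∨ (c = 1 ∧ P1)) := by
  rw [adj_comm]; exact mkF_adj_inl_inr

@[simp] lemma mkF_adj_inr_inr {c d : Fin 2} :
    (mkF F₀ v P0 P1 Pab).Adj (inr c) (inr d) ↔ Pab ∧ ((c = 0 ∧ d = 1) ∨ (c = 1 ∧ d = 0)) := by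
  simp only [mkF]
  constructor
  · rintro (⟨a, b, h, h', _⟩ | ⟨h, h'⟩ | ⟨h, h'⟩ | ⟨h, h'⟩) <;> simp_all <;> tauto
  · rintro ⟨h, h'⟩; exact Or.inr (Or.inr (Or.inr ⟨h, by tauto⟩))

lemma mkF_le_hat : mkF F₀ v P0 P1 Pab ≤ hatG G v ↔ F₀ ≤ G := by
  constructor
  · intro h p q hpq
    have : (hatG G v).Adj (inl p) (inl q) := h (by simpa using hpq)
    simpa using this
  · intro h x y hxy
    cases x <;> cases y <;> simp_all <;>
      first
        | exact h hxy
        | (rcases hxy.2 with ⟨h1, h2⟩ | ⟨h1, h2⟩ <;> simp [h1, h2])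

lemma mkF_comap : (mkF F₀ v P0 P1 Pab).comap Sum.inl = F₀ := by
  ext p q; simp [SimpleGraph.comap]

lemma mkF_decomp {F : SimpleGraph (V ⊕ Fin 2)} (h : F ≤ hatG G v) :
    F = mkF (F.comap Sum.inl) v (F.Adj (inl v) (inr 0)) (F.Adj (inl v) (inr 1))
        (F.Adj (inr 0) (inr 1)) := by
  ext x y
  cases x with
  | inl p => cases y with
    | inl q => simp [SimpleGraph.comap]
    | inr c =>
      simp only [mkF_adj_inl_inr]
      constructor
      · intro hadj
        have hv : p = v := by simpa using h hadj
        subst hv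
        fin_cases c <;> simp_all
      · rintro ⟨rfl, ⟨rfl, h'⟩ | ⟨rfl, h'⟩⟩ <;> exact h'
  | inr c => cases y with
    | inl q =>
      simp only [mkF_adj_inr_inl]
      rw [F.adj_comm]
      constructor
      · intro hadj
        have hv : q = v := by simpa using h hadj
        subst hv
        fin_cases c <;> simp_all
      · rintro ⟨rfl, ⟨rfl, h'⟩ | ⟨rfl, h'⟩⟩ <;> exact h'
    | inr d =>
      simp only [mkF_adj_inr_inr]
      constructor
      · intro hadj
        have hne : c ≠ d := by simpa using h hadj
        fin_cases c <;> fin_cases d <;> simp_all [F.adj_comm]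
      · rintro ⟨h', ⟨rfl, rfl⟩ | ⟨rfl, rfl⟩⟩
        · exact h'
        · exact h'.symm
end

section
variable {V : Type*} {G F₀ : SimpleGraph V} {v : V} {P0 P1 Pab : Prop}

def lkP (P0 P1 Pab : Prop) : Fin 2 → Prop :=
  fun c => if c = 0 then P0 ∨ (P1 ∧ Pab) else P1 ∨ (P0 ∧ Pab)

/-- Explicit description of reachability in `mkF`. -/
def Rrel (F₀ : SimpleGraph V) (v : V) (P0 P1 Pab : Prop) :
    V ⊕ Fin 2 → V ⊕ Fin 2 → Prop
  | inl p, inl q => F₀.Reachable p q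
  | inl p, inr c => F₀.Reachable p v ∧ lkP P0 P1 Pab c
  | inr c, inl q => F₀.Reachable q v ∧ lkP P0 P1 Pab c
  | inr c, inr d => c = d ∨ Pab ∨ (P0 ∧ P1)

lemma lk_trans {c d : Fin 2} (h : Pab ∨ P0 ∧ P1) (hc : lkP P0 P1 Pab c) :
    lkP P0 P1 Pab d := by
  fin_cases c <;> fin_cases d <;> simp only [lkP] at * <;> simp_all <;> tauto

lemma lk_pair {c d : Fin 2} (hc : lkP P0 P1 Pab c) (hd : lkP P0 P1 Pab d) (h : c ≠ d) :
    Pab ∨ P0 ∧ P1 := by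
  fin_cases c <;> fin_cases d <;> simp only [lkP] at * <;> simp_all <;> tauto

lemma Rrel_refl (x : V ⊕ Fin 2) : Rrel F₀ v P0 P1 Pab x x := by
  cases x with
  | inl p => exact Reachable.refl p
  | inr c => exact Or.inl rfl

lemma Rrel_trans {x y z : V ⊕ Fin 2} (h1 : Rrel F₀ v P0 P1 Pab x y)
    (h2 : Rrel F₀ v P0 P1 Pab y z) : Rrel F₀ v P0 P1 Pab x z := by
  cases x with
  | inl p => cases y with
    | inl q => cases z with
      | inl r => exact h1.trans h2
      | inr c => exact ⟨h1.trans h2.1, h2.2⟩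
    | inr c => cases z with
      | inl r => exact h1.1.trans h2.1.symm
      | inr d =>
        refine ⟨h1.1, ?_⟩
        rcases h2 with rfl | h2
        · exact h1.2
        · exact lk_trans h2 h1.2
  | inr c => cases y with
    | inl q => cases z with
      | inl r => exact ⟨h2.symm.trans h1.1, h1.2⟩
      | inr d =>
        by_cases hcd : c = d
        · exact Or.inl hcd
        · exact Or.inr (lk_pair h1.2 h2.2 hcd)
    | inr d => cases z with
      | inl r =>
        refine ⟨h2.1, ?_⟩
        rcases h1 with rfl | h1
        · exact h2.2
        · exact lk_trans h1 h2.2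
      | inr e =>
        rcases h1 with rfl | h1
        · exact h2
        · exact Or.inr h1

lemma Rrel_of_adj {x y : V ⊕ Fin 2} (h : (mkF F₀ v P0 P1 Pab).Adj x y) :
    Rrel F₀ v P0 P1 Pab x y := by
  cases x with
  | inl p => cases y with
    | inl q => exact (mkF_adj_inl_inl.mp h).reachable
    | inr c =>
      rw [mkF_adj_inl_inr] at h
      obtain ⟨rfl, h⟩ := h
      refine ⟨Reachable.refl _, ?_⟩
      rcases h with ⟨rfl, h⟩ | ⟨rfl, h⟩ <;> simp [lkP] <;> tauto
  | inr c => cases y with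
    | inl q =>
      rw [mkF_adj_inr_inl] at h
      obtain ⟨rfl, h⟩ := h
      refine ⟨Reachable.refl _, ?_⟩
      rcases h with ⟨rfl, h⟩ | ⟨rfl, h⟩ <;> simp [lkP] <;> tauto
    | inr d => exact Or.inr (Or.inl (mkF_adj_inr_inr.mp h).1)

/-- The homomorphism `F₀ →g mkF`. -/
def mkFHom (F₀ : SimpleGraph V) (v : V) (P0 P1 Pab : Prop) : F₀ →g mkF F₀ v P0 P1 Pab where
  toFun := Sum.inl
  map_rel' := fun h => mkF_adj_inl_inl.mpr h

lemma reach_inl_inl (h : F₀.Reachable p q) :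
    (mkF F₀ v P0 P1 Pab).Reachable (inl p) (inl q) :=
  h.map (mkFHom F₀ v P0 P1 Pab)

lemma reach_inl_inr {c : Fin 2} (h : lkP P0 P1 Pab c) :
    (mkF F₀ v P0 P1 Pab).Reachable (inl v) (inr c) := by
  fin_cases c <;> simp only [lkP] at h <;> simp at h
  · rcases h with h | ⟨h1, h2⟩
    · exact (mkF_adj_inl_inr.mpr ⟨rfl, Or.inl ⟨rfl, h⟩⟩).reachable
    · exact ((mkF_adj_inl_inr.mpr ⟨rfl, Or.inr ⟨rfl, h1⟩⟩).reachable).trans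
        ((mkF_adj_inr_inr.mpr ⟨h2, Or.inr ⟨rfl, rfl⟩⟩).reachable)
  · rcases h with h | ⟨h1, h2⟩
    · exact (mkF_adj_inl_inr.mpr ⟨rfl, Or.inr ⟨rfl, h⟩⟩).reachable
    · exact ((mkF_adj_inl_inr.mpr ⟨rfl, Or.inl ⟨rfl, h1⟩⟩).reachable).trans
        ((mkF_adj_inr_inr.mpr ⟨h2, Or.inl ⟨rfl, rfl⟩⟩).reachable)

lemma reach_inr_inr {c d : Fin 2} (h : Pab ∨ (P0 ∧ P1)) :
    (mkF F₀ v P0 P1 Pab).Reachable (inr c) (inr d) := by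
  have key : (mkF F₀ v P0 P1 Pab).Reachable (inr 0) (inr 1) := by
    rcases h with h | ⟨h0, h1⟩
    · exact (mkF_adj_inr_inr.mpr ⟨h, Or.inl ⟨rfl, rfl⟩⟩).reachable
    · exact ((mkF_adj_inr_inl.mpr ⟨rfl, Or.inl ⟨rfl, h0⟩⟩).reachable).trans
        ((mkF_adj_inl_inr.mpr ⟨rfl, Or.inr ⟨rfl, h1⟩⟩).reachable)
  fin_cases c <;> fin_cases d
  · rfl
  · exact key
  · exact key.symm
  · rfl

lemma reach_iff {x y : V ⊕ Fin 2} :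
    (mkF F₀ v P0 P1 Pab).Reachable x y ↔ Rrel F₀ v P0 P1 Pab x y := by
  constructor
  · rintro ⟨w⟩
    induction w with
    | nil => exact Rrel_refl _
    | cons h _ ih => exact Rrel_trans (Rrel_of_adj h) ih
  · intro h
    cases x with
    | inl p => cases y with
      | inl q => exact reach_inl_inl h
      | inr c => exact (reach_inl_inl h.1).trans (reach_inl_inr h.2)
    | inr c => cases y with
      | inl q => exact ((reach_inl_inl h.1).trans (reach_inl_inr h.2)).symm
      | inr d =>
        rcases h with rfl | h
        · rfl
        · exact reach_inr_inr h
end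

section
variable {V : Type*} {G F₀ : SimpleGraph V} {v : V} {P0 P1 Pab : Prop}

lemma mkF_sdiff_inl {p q : V} :
    mkF F₀ v P0 P1 Pab \ fromEdgeSet {s(inl p, inl q)}
      = mkF (F₀ \ fromEdgeSet {s(p, q)}) v P0 P1 Pab := by
  ext x y
  cases x <;> cases y <;>
    simp [Sym2.eq_iff, SimpleGraph.sdiff_adj, SimpleGraph.fromEdgeSet_adj] <;>
    aesop

lemma mkF_sdiff_e0 :
    mkF F₀ v P0 P1 Pab \ fromEdgeSet {s(inl v, inr 0)} = mkF F₀ v False P1 Pab := by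
  ext x y
  cases x <;> cases y <;>
    simp [Sym2.eq_iff, SimpleGraph.sdiff_adj, SimpleGraph.fromEdgeSet_adj] <;>
    aesop

lemma mkF_sdiff_e1 :
    mkF F₀ v P0 P1 Pab \ fromEdgeSet {s(inl v, inr 1)} = mkF F₀ v P0 False Pab := by
  ext x y
  cases x <;> cases y <;>
    simp [Sym2.eq_iff, SimpleGraph.sdiff_adj, SimpleGraph.fromEdgeSet_adj] <;>
    aesop

lemma mkF_sdiff_eab :
    mkF F₀ v P0 P1 Pab \ fromEdgeSet {s(inr 0, inr 1)} = mkF F₀ v P0 P1 False := by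
  ext x y
  cases x <;> cases y <;>
    simp [Sym2.eq_iff, SimpleGraph.sdiff_adj, SimpleGraph.fromEdgeSet_adj] <;>
    aesop

lemma acyclic_mkF :
    (mkF F₀ v P0 P1 Pab).IsAcyclic ↔ F₀.IsAcyclic ∧ ¬(P0 ∧ P1 ∧ Pab) := by
  rw [isAcyclic_iff_forall_adj_isBridge, isAcyclic_iff_forall_adj_isBridge]
  constructor
  · intro H
    constructor
    · intro p q h
      have hb := H (mkF_adj_inl_inl.mpr h)
      rw [isBridge_iff, deleteEdges, mkF_sdiff_inl] at hb
      refine fun hr => hb ?_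
      rw [reach_iff]
      exact hr
    · rintro ⟨h0, h1, hab⟩
      have hb := H (mkF_adj_inl_inr.mpr ⟨rfl, Or.inl ⟨rfl, h0⟩⟩)
      rw [isBridge_iff, deleteEdges, mkF_sdiff_e0] at hb
      apply hb
      rw [reach_iff]
      exact ⟨Reachable.refl _, by simp [lkP]; tauto⟩
  · rintro ⟨hF, htri⟩ x y hxy
    cases x with
    | inl p => cases y with
      | inl q =>
        rw [isBridge_iff, deleteEdges, mkF_sdiff_inl]
        refine fun hr => ?_
        rw [reach_iff] at hr
        exact (isBridge_iff.mp (hF (mkF_adj_inl_inl.mp hxy))) hr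
      | inr c =>
        rw [mkF_adj_inl_inr] at hxy
        obtain ⟨rfl, hc⟩ := hxy
        rcases hc with ⟨rfl, h0⟩ | ⟨rfl, h1⟩
        · rw [isBridge_iff, deleteEdges, mkF_sdiff_e0]
          refine fun hr => ?_
          rw [reach_iff] at hr
          have := hr.2
          simp [lkP] at this
          exact htri ⟨h0, this⟩
        · rw [isBridge_iff, deleteEdges, mkF_sdiff_e1]
          refine fun hr => ?_
          rw [reach_iff] at hr
          have := hr.2
          simp [lkP] at this
          exact htri ⟨this.1, h1, this.2⟩
    | inr c => cases y with
      | inl q =>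
        rw [mkF_adj_inr_inl] at hxy
        obtain ⟨rfl, hc⟩ := hxy
        rw [Sym2.eq_swap]
        rcases hc with ⟨rfl, h0⟩ | ⟨rfl, h1⟩
        · rw [isBridge_iff, deleteEdges, mkF_sdiff_e0]
          refine fun hr => ?_
          rw [reach_iff] at hr
          have := hr.2
          simp [lkP] at this
          exact htri ⟨h0, this⟩
        · rw [isBridge_iff, deleteEdges, mkF_sdiff_e1]
          refine fun hr => ?_
          rw [reach_iff] at hr
          have := hr.2
          simp [lkP] at this
          exact htri ⟨this.1, h1, this.2⟩
      | inr d =>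
        have hab := (mkF_adj_inr_inr.mp hxy).1
        rcases (mkF_adj_inr_inr.mp hxy).2 with ⟨rfl, rfl⟩ | ⟨rfl, rfl⟩
        · rw [isBridge_iff, deleteEdges, mkF_sdiff_eab]
          refine fun hr => ?_
          rw [reach_iff] at hr
          rcases hr with h | h | ⟨h0, h1⟩
          · simp at h
          · exact h
          · exact htri ⟨h0, h1, hab⟩
        · rw [Sym2.eq_swap, isBridge_iff, deleteEdges, mkF_sdiff_eab]
          refine fun hr => ?_
          rw [reach_iff] at hr
          rcases hr with h | h | ⟨h0, h1⟩
          · simp at h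
          · exact h
          · exact htri ⟨h0, h1, hab⟩
end

section
variable {V : Type*} {G F₀ : SimpleGraph V} {v : V} {P0 P1 Pab : Prop}

lemma lkP_zero : lkP P0 P1 Pab 0 ↔ P0 ∨ (P1 ∧ Pab) := by simp [lkP]

lemma lkP_one : lkP P0 P1 Pab 1 ↔ P1 ∨ (P0 ∧ Pab) := by
  simp [lkP, Fin.ext_iff]

lemma sep_mkF_inl_inl (i j : V) :
    IsTwoForestSep (hatG G v) (mkF F₀ v P0 P1 Pab) (inl i) (inl j) ↔
      IsTwoForestSep G F₀ i j ∧ (P0 ∨ P1 ∧ Pab) ∧ (P1 ∨ P0 ∧ Pab) ∧ ¬(P0 ∧ P1 ∧ Pab) := by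
  unfold IsTwoForestSep
  rw [mkF_le_hat, acyclic_mkF]
  constructor
  · rintro ⟨hle, ⟨hacyc, htri⟩, hnr, hcov⟩
    have hnr' : ¬ F₀.Reachable i j := fun h => hnr (reach_iff.mpr h)
    have hcV : ∀ p : V, F₀.Reachable p i ∨ F₀.Reachable p j := by
      intro p
      rcases hcov (inl p) with h | h
      · exact Or.inl (reach_iff.mp h)
      · exact Or.inr (reach_iff.mp h)
    have hlk0 : lkP P0 P1 Pab 0 := by
      rcases hcov (inr 0) with h | h <;> exact (reach_iff.mp h).2
    have hlk1 : lkP P0 P1 Pab 1 := by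
      rcases hcov (inr 1) with h | h <;> exact (reach_iff.mp h).2
    exact ⟨⟨hle, hacyc, hnr', hcV⟩, lkP_zero.mp hlk0, lkP_one.mp hlk1, htri⟩
  · rintro ⟨⟨hle, hacyc, hnr, hcV⟩, hlk0, hlk1, htri⟩
    refine ⟨hle, ⟨hacyc, htri⟩, fun h => hnr (reach_iff.mp h), ?_⟩
    intro x
    cases x with
    | inl p =>
      rcases hcV p with h | h
      · exact Or.inl (reach_iff.mpr h)
      · exact Or.inr (reach_iff.mpr h)
    | inr c =>
      have hlk : lkP P0 P1 Pab c := by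
        fin_cases c
        · exact lkP_zero.mpr hlk0
        · exact lkP_one.mpr hlk1
      rcases hcV v with h | h
      · exact Or.inl (reach_iff.mpr ⟨h.symm.symm.symm, hlk⟩)
      · exact Or.inr (reach_iff.mpr ⟨h.symm.symm.symm, hlk⟩)

lemma sep_mkF_ab :
    IsTwoForestSep (hatG G v) (mkF F₀ v P0 P1 Pab) (inr 0) (inr 1) ↔
      (F₀ ≤ G ∧ F₀.IsAcyclic ∧ ∀ p, F₀.Reachable p v) ∧
        ((P0 ∧ ¬P1) ∨ (¬P0 ∧ P1)) ∧ ¬Pab := by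
  unfold IsTwoForestSep
  rw [mkF_le_hat, acyclic_mkF]
  constructor
  · rintro ⟨hle, ⟨hacyc, htri⟩, hnr, hcov⟩
    have hnr' : ¬((0 : Fin 2) = 1 ∨ Pab ∨ (P0 ∧ P1)) := fun h => hnr (reach_iff.mpr h)
    push_neg at hnr'
    obtain ⟨-, hnab, hn01⟩ := hnr'
    have hall : ∀ p : V, F₀.Reachable p v ∧ (lkP P0 P1 Pab 0 ∨ lkP P0 P1 Pab 1) := by
      intro p
      rcases hcov (inl p) with h | h
      · have := reach_iff.mp h; exact ⟨this.1, Or.inl this.2⟩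
      · have := reach_iff.mp h; exact ⟨this.1, Or.inr this.2⟩
    have h01 : P0 ∨ P1 := by
      rcases (hall v).2 with h | h
      · rw [lkP_zero] at h; tauto
      · rw [lkP_one] at h; tauto
    refine ⟨⟨hle, hacyc, fun p => (hall p).1⟩, ?_, hnab⟩
    tauto
  · rintro ⟨⟨hle, hacyc, hall⟩, hone, hnab⟩
    have htri : ¬(P0 ∧ P1 ∧ Pab) := fun h => hnab h.2.2
    refine ⟨hle, ⟨hacyc, htri⟩, fun h => ?_, ?_⟩
    · rcases reach_iff.mp h with h | h | h
      · simp at h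
      · exact hnab h
      · tauto
    · intro x
      cases x with
      | inl p =>
        rcases hone with ⟨h0, -⟩ | ⟨-, h1⟩
        · exact Or.inl (reach_iff.mpr ⟨hall p, lkP_zero.mpr (Or.inl h0)⟩)
        · exact Or.inr (reach_iff.mpr ⟨hall p, lkP_one.mpr (Or.inl h1)⟩)
      | inr c =>
        fin_cases c
        · exact Or.inl (reach_iff.mpr (Or.inl rfl))
        · exact Or.inr (reach_iff.mpr (Or.inl rfl))

lemma sep_mkF_inr0_inl (j : V) :
    IsTwoForestSep (hatG G v) (mkF F₀ v P0 P1 Pab) (inr 0) (inl j) ↔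
      (IsTwoForestSep G F₀ v j ∧ (P0 ∨ P1 ∧ Pab) ∧ (P1 ∨ P0 ∧ Pab) ∧ ¬(P0 ∧ P1 ∧ Pab)) ∨
      ((F₀ ≤ G ∧ F₀.IsAcyclic ∧ ∀ p, F₀.Reachable p v) ∧
        ¬(P0 ∨ P1 ∧ Pab) ∧ (P1 ∨ Pab)) := by
  unfold IsTwoForestSep
  rw [mkF_le_hat, acyclic_mkF]
  constructor
  · rintro ⟨hle, ⟨hacyc, htri⟩, hnr, hcov⟩
    by_cases hlk0 : P0 ∨ P1 ∧ Pab
    · left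
      have hnjv : ¬ F₀.Reachable j v := by
        intro h
        exact hnr (reach_iff.mpr ⟨h, lkP_zero.mpr hlk0⟩)
      have hcV : ∀ p : V, F₀.Reachable p v ∨ F₀.Reachable p j := by
        intro p
        rcases hcov (inl p) with h | h
        · exact Or.inl (reach_iff.mp h).1
        · exact Or.inr (reach_iff.mp h)
      have hnvj : ¬ F₀.Reachable v j := fun h => hnjv h.symm
      have hlk1 : P1 ∨ P0 ∧ Pab := by
        rcases hcov (inr 1) with h | h
        · rcases reach_iff.mp h with h | h | h
          · simp [Fin.ext_iff] at h
          · tauto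
          · tauto
        · exact absurd (reach_iff.mp h).1 hnjv
      exact ⟨⟨hle, hacyc, hnvj, hcV⟩, hlk0, hlk1, htri⟩
    · right
      have hcVj : ∀ p : V, F₀.Reachable p j := by
        intro p
        rcases hcov (inl p) with h | h
        · exact absurd (lkP_zero.mp (reach_iff.mp h).2) hlk0
        · exact reach_iff.mp h
      have hall : ∀ p : V, F₀.Reachable p v := fun p => (hcVj p).trans (hcVj v).symm
      have hP1ab : P1 ∨ Pab := by
        rcases hcov (inr 1) with h | h
        · rcases reach_iff.mp h with h | h | h
          · simp [Fin.ext_iff] at h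
          · exact Or.inr h
          · exact absurd (Or.inl h.1) hlk0
        · rcases lkP_one.mp (reach_iff.mp h).2 with h' | h'
          · exact Or.inl h'
          · exact absurd (Or.inl h'.1) hlk0
      exact ⟨⟨hle, hacyc, hall⟩, hlk0, hP1ab⟩
  · rintro (⟨⟨hle, hacyc, hnr, hcV⟩, hlk0, hlk1, htri⟩ | ⟨⟨hle, hacyc, hall⟩, hnlk0, hP1ab⟩)
    · refine ⟨hle, ⟨hacyc, htri⟩, fun h => ?_, ?_⟩
      · exact hnr ((reach_iff.mp h).1).symm
      · intro x
        cases x with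
        | inl p =>
          rcases hcV p with h | h
          · exact Or.inl (reach_iff.mpr ⟨h, lkP_zero.mpr hlk0⟩)
          · exact Or.inr (reach_iff.mpr h)
        | inr c =>
          fin_cases c
          · exact Or.inl (reach_iff.mpr (Or.inl rfl))
          · exact Or.inl (reach_iff.mpr (Or.inr
              (lk_pair (lkP_zero.mpr hlk0) (lkP_one.mpr hlk1) (by simp [Fin.ext_iff]))))
    · have htri : ¬(P0 ∧ P1 ∧ Pab) := fun h => hnlk0 (Or.inl h.1)
      refine ⟨hle, ⟨hacyc, htri⟩, fun h => ?_, ?_⟩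
      · exact hnlk0 (lkP_zero.mp (reach_iff.mp h).2)
      · intro x
        cases x with
        | inl p => exact Or.inr (reach_iff.mpr ((hall p).trans (hall j).symm))
        | inr c =>
          fin_cases c
          · exact Or.inl (reach_iff.mpr (Or.inl rfl))
          · rcases hP1ab with h | h
            · exact Or.inr (reach_iff.mpr ⟨hall j, lkP_one.mpr (Or.inl h)⟩)
            · exact Or.inl (reach_iff.mpr (Or.inr (Or.inl h)))
end

section
variable {V : Type*} {G F₀ : SimpleGraph V} {v : V} {P0 P1 Pab : Prop}

lemma mkF_congr {Q0 Q1 Qab : Prop} (h0 : P0 ↔ Q0) (h1 : P1 ↔ Q1) (hab : Pab ↔ Qab) :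
    mkF F₀ v P0 P1 Pab = mkF F₀ v Q0 Q1 Qab := by
  obtain rfl := propext h0
  obtain rfl := propext h1
  obtain rfl := propext hab
  rfl

lemma mkF_e0 : (mkF F₀ v P0 P1 Pab).Adj (inl v) (inr 0) ↔ P0 := by
  simp [Fin.ext_iff]

lemma mkF_e1 : (mkF F₀ v P0 P1 Pab).Adj (inl v) (inr 1) ↔ P1 := by
  simp [Fin.ext_iff]

lemma mkF_eab : (mkF F₀ v P0 P1 Pab).Adj (inr 0) (inr 1) ↔ Pab := by
  simp [Fin.ext_iff]

lemma mkF_inj {F₀' : SimpleGraph V} {Q0 Q1 Qab : Prop}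
    (h : mkF F₀ v P0 P1 Pab = mkF F₀' v Q0 Q1 Qab) :
    F₀ = F₀' ∧ (P0 ↔ Q0) ∧ (P1 ↔ Q1) ∧ (Pab ↔ Qab) := by
  refine ⟨?_, ?_, ?_, ?_⟩
  · rw [← mkF_comap (F₀ := F₀) (v := v) (P0 := P0) (P1 := P1) (Pab := Pab), h, mkF_comap]
  · have h0 : ((mkF F₀ v P0 P1 Pab).Adj (inl v) (inr 0)) =
        ((mkF F₀' v Q0 Q1 Qab).Adj (inl v) (inr 0)) := by rw [h]
    simp only [mkF_e0] at h0
    exact iff_of_eq h0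
  · have h1 : ((mkF F₀ v P0 P1 Pab).Adj (inl v) (inr 1)) =
        ((mkF F₀' v Q0 Q1 Qab).Adj (inl v) (inr 1)) := by rw [h]
    simp only [mkF_e1] at h1
    exact iff_of_eq h1
  · have hab : ((mkF F₀ v P0 P1 Pab).Adj (inr 0) (inr 1)) =
        ((mkF F₀' v Q0 Q1 Qab).Adj (inr 0) (inr 1)) := by rw [h]
    simp only [mkF_eab] at hab
    exact iff_of_eq hab

lemma spanning_iff :
    IsSpanningTree G F₀ ↔ (F₀ ≤ G ∧ F₀.IsAcyclic ∧ ∀ p, F₀.Reachable p v) := by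
  constructor
  · rintro ⟨hle, hconn, hacyc⟩
    exact ⟨hle, hacyc, fun p => hconn.preconnected p v⟩
  · rintro ⟨hle, hacyc, hall⟩
    exact ⟨hle, (connected_iff F₀).mpr ⟨fun x y => (hall x).trans (hall y).symm, ⟨v⟩⟩, hacyc⟩

lemma fInl_mem {i j : V} (hF : IsTwoForestSep G F₀ i j) (k : Fin 3) :
    IsTwoForestSep (hatG G v) (mkF F₀ v (k ≠ 2) (k ≠ 1) (k ≠ 0)) (inl i) (inl j) := by
  rw [sep_mkF_inl_inl]
  refine ⟨hF, ?_, ?_, ?_⟩ <;> fin_cases k <;> decide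

/-- Forward map for the `(inl i, inl j)` entries. -/
noncomputable def fInl (G : SimpleGraph V) (v i j : V) :
    {F₀ : SimpleGraph V // IsTwoForestSep G F₀ i j} × Fin 3 →
      {F : SimpleGraph (V ⊕ Fin 2) // IsTwoForestSep (hatG G v) F (inl i) (inl j)} :=
  fun x => ⟨mkF x.1.1 v (x.2 ≠ 2) (x.2 ≠ 1) (x.2 ≠ 0), fInl_mem x.1.2 x.2⟩

lemma fInl_bij (G : SimpleGraph V) (v i j : V) : Function.Bijective (fInl G v i j) := by
  constructor
  · rintro ⟨⟨F₀, hF⟩, k⟩ ⟨⟨F₀', hF'⟩, k'⟩ heq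
    obtain ⟨hE, h0, h1, hab⟩ := mkF_inj (Subtype.ext_iff.mp heq)
    have hk : k = k' := by
      have : ∀ a b : Fin 3, ((a ≠ 2) ↔ (b ≠ 2)) → ((a ≠ 1) ↔ (b ≠ 1)) → a = b := by decide
      exact this k k' h0 h1
    subst hE; subst hk; rfl
  · rintro ⟨F, hF⟩
    have hle := hF.1
    have hdec := mkF_decomp hle
    rw [hdec, sep_mkF_inl_inl] at hF
    obtain ⟨h₀, hlk0, hlk1, htri⟩ := hF
    by_cases p0 : F.Adj (inl v) (inr 0) <;> by_cases p1 : F.Adj (inl v) (inr 1)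
    · have pab : ¬ F.Adj (inr 0) (inr 1) := fun h => htri ⟨p0, p1, h⟩
      refine ⟨⟨⟨F.comap Sum.inl, h₀⟩, 0⟩, Subtype.ext ?_⟩
      show mkF (F.comap Sum.inl) v ((0 : Fin 3) ≠ 2) ((0 : Fin 3) ≠ 1) ((0 : Fin 3) ≠ 0) = F
      conv_rhs => rw [hdec]
      exact mkF_congr (iff_of_true (by decide) p0) (iff_of_true (by decide) p1)
        (iff_of_false (by decide) pab)
    · have pab : F.Adj (inr 0) (inr 1) := by tauto
      refine ⟨⟨⟨F.comap Sum.inl, h₀⟩, 1⟩, Subtype.ext ?_⟩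
      show mkF (F.comap Sum.inl) v ((1 : Fin 3) ≠ 2) ((1 : Fin 3) ≠ 1) ((1 : Fin 3) ≠ 0) = F
      conv_rhs => rw [hdec]
      exact mkF_congr (iff_of_true (by decide) p0) (iff_of_false (by decide) p1)
        (iff_of_true (by decide) pab)
    · have pab : F.Adj (inr 0) (inr 1) := by tauto
      refine ⟨⟨⟨F.comap Sum.inl, h₀⟩, 2⟩, Subtype.ext ?_⟩
      show mkF (F.comap Sum.inl) v ((2 : Fin 3) ≠ 2) ((2 : Fin 3) ≠ 1) ((2 : Fin 3) ≠ 0) = F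
      conv_rhs => rw [hdec]
      exact mkF_congr (iff_of_false (by decide) p0) (iff_of_true (by decide) p1)
        (iff_of_true (by decide) pab)
    · exact absurd hlk0 (by tauto)

lemma fAB_mem {T : SimpleGraph V} (hT : IsSpanningTree G T) (k : Fin 2) :
    IsTwoForestSep (hatG G v) (mkF T v (k = 0) (k = 1) False) (inr 0) (inr 1) := by
  rw [sep_mkF_ab]
  refine ⟨(spanning_iff (v := v)).mp hT, ?_, not_false⟩
  fin_cases k <;> decide

/-- Forward map for the `(a, b)` entry. -/
noncomputable def fAB (G : SimpleGraph V) (v : V) :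
    {T : SimpleGraph V // IsSpanningTree G T} × Fin 2 →
      {F : SimpleGraph (V ⊕ Fin 2) // IsTwoForestSep (hatG G v) F (inr 0) (inr 1)} :=
  fun x => ⟨mkF x.1.1 v (x.2 = 0) (x.2 = 1) False, fAB_mem x.1.2 x.2⟩

lemma fAB_bij (G : SimpleGraph V) (v : V) : Function.Bijective (fAB G v) := by
  constructor
  · rintro ⟨⟨T, hT⟩, k⟩ ⟨⟨T', hT'⟩, k'⟩ heq
    obtain ⟨hE, h0, h1, hab⟩ := mkF_inj (Subtype.ext_iff.mp heq)
    have hk : k = k' := by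
      have : ∀ a b : Fin 2, ((a = 0) ↔ (b = 0)) → a = b := by decide
      exact this k k' h0
    subst hE; subst hk; rfl
  · rintro ⟨F, hF⟩
    have hle := hF.1
    have hdec := mkF_decomp hle
    rw [hdec, sep_mkF_ab] at hF
    obtain ⟨hsp, hone, hnab⟩ := hF
    have hT : IsSpanningTree G (F.comap Sum.inl) := (spanning_iff (v := v)).mpr hsp
    rcases hone with ⟨p0, np1⟩ | ⟨np0, p1⟩
    · refine ⟨⟨⟨F.comap Sum.inl, hT⟩, 0⟩, Subtype.ext ?_⟩
      show mkF (F.comap Sum.inl) v ((0 : Fin 2) = 0) ((0 : Fin 2) = 1) False = F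
      conv_rhs => rw [hdec]
      exact mkF_congr (iff_of_true rfl p0) (iff_of_false (by decide) np1)
        (iff_of_false not_false hnab)
    · refine ⟨⟨⟨F.comap Sum.inl, hT⟩, 1⟩, Subtype.ext ?_⟩
      show mkF (F.comap Sum.inl) v ((1 : Fin 2) = 0) ((1 : Fin 2) = 1) False = F
      conv_rhs => rw [hdec]
      exact mkF_congr (iff_of_false (by decide) np0) (iff_of_true rfl p1)
        (iff_of_false not_false hnab)
end

section
variable {V : Type*} {G F₀ : SimpleGraph V} {v : V} {P0 P1 Pab : Prop}

lemma sep_mkF_inr1_inl (j : V) :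
    IsTwoForestSep (hatG G v) (mkF F₀ v P0 P1 Pab) (inr 1) (inl j) ↔
      (IsTwoForestSep G F₀ v j ∧ (P0 ∨ P1 ∧ Pab) ∧ (P1 ∨ P0 ∧ Pab) ∧ ¬(P0 ∧ P1 ∧ Pab)) ∨
      ((F₀ ≤ G ∧ F₀.IsAcyclic ∧ ∀ p, F₀.Reachable p v) ∧
        ¬(P1 ∨ P0 ∧ Pab) ∧ (P0 ∨ Pab)) := by
  unfold IsTwoForestSep
  rw [mkF_le_hat, acyclic_mkF]
  constructor
  · rintro ⟨hle, ⟨hacyc, htri⟩, hnr, hcov⟩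
    by_cases hlk1 : P1 ∨ P0 ∧ Pab
    · left
      have hnjv : ¬ F₀.Reachable j v := by
        intro h
        exact hnr (reach_iff.mpr ⟨h, lkP_one.mpr hlk1⟩)
      have hcV : ∀ p : V, F₀.Reachable p v ∨ F₀.Reachable p j := by
        intro p
        rcases hcov (inl p) with h | h
        · exact Or.inl (reach_iff.mp h).1
        · exact Or.inr (reach_iff.mp h)
      have hnvj : ¬ F₀.Reachable v j := fun h => hnjv h.symm
      have hlk0 : P0 ∨ P1 ∧ Pab := by
        rcases hcov (inr 0) with h | h
        · rcases reach_iff.mp h with h | h | h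
          · simp [Fin.ext_iff] at h
          · tauto
          · tauto
        · exact absurd (reach_iff.mp h).1 hnjv
      exact ⟨⟨hle, hacyc, hnvj, hcV⟩, hlk0, hlk1, htri⟩
    · right
      have hcVj : ∀ p : V, F₀.Reachable p j := by
        intro p
        rcases hcov (inl p) with h | h
        · exact absurd (lkP_one.mp (reach_iff.mp h).2) hlk1
        · exact reach_iff.mp h
      have hall : ∀ p : V, F₀.Reachable p v := fun p => (hcVj p).trans (hcVj v).symm
      have hP0ab : P0 ∨ Pab := by
        rcases hcov (inr 0) with h | h
        · rcases reach_iff.mp h with h | h | h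
          · simp [Fin.ext_iff] at h
          · exact Or.inr h
          · exact absurd (Or.inl h.2) hlk1
        · rcases lkP_zero.mp (reach_iff.mp h).2 with h' | h'
          · exact Or.inl h'
          · exact absurd (Or.inl h'.1) hlk1
      exact ⟨⟨hle, hacyc, hall⟩, hlk1, hP0ab⟩
  · rintro (⟨⟨hle, hacyc, hnr, hcV⟩, hlk0, hlk1, htri⟩ | ⟨⟨hle, hacyc, hall⟩, hnlk1, hP0ab⟩)
    · refine ⟨hle, ⟨hacyc, htri⟩, fun h => ?_, ?_⟩
      · exact hnr ((reach_iff.mp h).1).symm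
      · intro x
        cases x with
        | inl p =>
          rcases hcV p with h | h
          · exact Or.inl (reach_iff.mpr ⟨h, lkP_one.mpr hlk1⟩)
          · exact Or.inr (reach_iff.mpr h)
        | inr c =>
          fin_cases c
          · exact Or.inl (reach_iff.mpr (Or.inr
              (lk_pair (lkP_zero.mpr hlk0) (lkP_one.mpr hlk1) (by simp [Fin.ext_iff]))))
          · exact Or.inl (reach_iff.mpr (Or.inl rfl))
    · have htri : ¬(P0 ∧ P1 ∧ Pab) := fun h => hnlk1 (Or.inl h.2.1)
      refine ⟨hle, ⟨hacyc, htri⟩, fun h => ?_, ?_⟩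
      · exact hnlk1 (lkP_one.mp (reach_iff.mp h).2)
      · intro x
        cases x with
        | inl p => exact Or.inr (reach_iff.mpr ((hall p).trans (hall j).symm))
        | inr c =>
          fin_cases c
          · rcases hP0ab with h | h
            · exact Or.inr (reach_iff.mpr ⟨hall j, lkP_zero.mpr (Or.inl h)⟩)
            · exact Or.inl (reach_iff.mpr (Or.inr (Or.inl h)))
          · exact Or.inl (reach_iff.mpr (Or.inl rfl))

lemma fC0A_mem {j : V} (hF : IsTwoForestSep G F₀ v j) (k : Fin 3) :
    IsTwoForestSep (hatG G v) (mkF F₀ v (k ≠ 2) (k ≠ 1) (k ≠ 0)) (inr 0) (inl j) := by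
  rw [sep_mkF_inr0_inl]
  left
  refine ⟨hF, ?_, ?_, ?_⟩ <;> fin_cases k <;> decide

lemma fC0B_mem {j : V} {T : SimpleGraph V} (hT : IsSpanningTree G T) (k : Fin 2) :
    IsTwoForestSep (hatG G v) (mkF T v False (k = 0) (k = 1)) (inr 0) (inl j) := by
  rw [sep_mkF_inr0_inl]
  right
  refine ⟨(spanning_iff (v := v)).mp hT, ?_, ?_⟩ <;> fin_cases k <;> decide

lemma fC1A_mem {j : V} (hF : IsTwoForestSep G F₀ v j) (k : Fin 3) :
    IsTwoForestSep (hatG G v) (mkF F₀ v (k ≠ 2) (k ≠ 1) (k ≠ 0)) (inr 1) (inl j) := by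
  rw [sep_mkF_inr1_inl]
  left
  refine ⟨hF, ?_, ?_, ?_⟩ <;> fin_cases k <;> decide

lemma fC1B_mem {j : V} {T : SimpleGraph V} (hT : IsSpanningTree G T) (k : Fin 2) :
    IsTwoForestSep (hatG G v) (mkF T v (k = 0) False (k = 1)) (inr 1) (inl j) := by
  rw [sep_mkF_inr1_inl]
  right
  refine ⟨(spanning_iff (v := v)).mp hT, ?_, ?_⟩ <;> fin_cases k <;> decide

/-- Forward map for the `(a, inl j)` entries. -/
noncomputable def fC0 (G : SimpleGraph V) (v j : V) :
    ({F₀ : SimpleGraph V // IsTwoForestSep G F₀ v j} × Fin 3) ⊕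
      ({T : SimpleGraph V // IsSpanningTree G T} × Fin 2) →
      {F : SimpleGraph (V ⊕ Fin 2) // IsTwoForestSep (hatG G v) F (inr 0) (inl j)} :=
  Sum.elim
    (fun x => ⟨mkF x.1.1 v (x.2 ≠ 2) (x.2 ≠ 1) (x.2 ≠ 0), fC0A_mem x.1.2 x.2⟩)
    (fun x => ⟨mkF x.1.1 v False (x.2 = 0) (x.2 = 1), fC0B_mem x.1.2 x.2⟩)

/-- Forward map for the `(b, inl j)` entries. -/
noncomputable def fC1 (G : SimpleGraph V) (v j : V) :
    ({F₀ : SimpleGraph V // IsTwoForestSep G F₀ v j} × Fin 3) ⊕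
      ({T : SimpleGraph V // IsSpanningTree G T} × Fin 2) →
      {F : SimpleGraph (V ⊕ Fin 2) // IsTwoForestSep (hatG G v) F (inr 1) (inl j)} :=
  Sum.elim
    (fun x => ⟨mkF x.1.1 v (x.2 ≠ 2) (x.2 ≠ 1) (x.2 ≠ 0), fC1A_mem x.1.2 x.2⟩)
    (fun x => ⟨mkF x.1.1 v (x.2 = 0) False (x.2 = 1), fC1B_mem x.1.2 x.2⟩)

lemma fC0_bij (G : SimpleGraph V) (v j : V) : Function.Bijective (fC0 G v j) := by
  constructor
  · rintro (⟨⟨F₀, hF⟩, k⟩ | ⟨⟨T, hT⟩, k⟩) (⟨⟨F₀', hF'⟩, k'⟩ | ⟨⟨T', hT'⟩, k'⟩) heq <;>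
      obtain ⟨hE, h0, h1, hab⟩ := mkF_inj (Subtype.ext_iff.mp heq)
    · have hk : k = k' := by
        have : ∀ a b : Fin 3, ((a ≠ 2) ↔ (b ≠ 2)) → ((a ≠ 1) ↔ (b ≠ 1)) → a = b := by decide
        exact this k k' h0 h1
      subst hE; subst hk; rfl
    · exfalso
      have : ∀ a : Fin 3, ∀ b : Fin 2,
          ¬(((a ≠ 2) ↔ False) ∧ ((a ≠ 1) ↔ (b = 0)) ∧ ((a ≠ 0) ↔ (b = 1))) := by decide
      exact this k k' ⟨h0, h1, hab⟩
    · exfalso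
      have : ∀ a : Fin 3, ∀ b : Fin 2,
          ¬((False ↔ (a ≠ 2)) ∧ ((b = 0) ↔ (a ≠ 1)) ∧ ((b = 1) ↔ (a ≠ 0))) := by decide
      exact this k' k ⟨h0, h1, hab⟩
    · have hk : k = k' := by
        have : ∀ a b : Fin 2, ((a = 0) ↔ (b = 0)) → a = b := by decide
        exact this k k' h1
      subst hE; subst hk; rfl
  · rintro ⟨F, hF⟩
    have hle := hF.1
    have hdec := mkF_decomp hle
    rw [hdec, sep_mkF_inr0_inl] at hF
    rcases hF with ⟨h₀, hlk0, hlk1, htri⟩ | ⟨hsp, hnlk0, hP1ab⟩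
    · by_cases p0 : F.Adj (inl v) (inr 0) <;> by_cases p1 : F.Adj (inl v) (inr 1)
      · have pab : ¬ F.Adj (inr 0) (inr 1) := fun h => htri ⟨p0, p1, h⟩
        refine ⟨Sum.inl ⟨⟨F.comap Sum.inl, h₀⟩, 0⟩, Subtype.ext ?_⟩
        show mkF (F.comap Sum.inl) v ((0 : Fin 3) ≠ 2) ((0 : Fin 3) ≠ 1) ((0 : Fin 3) ≠ 0) = F
        conv_rhs => rw [hdec]
        exact mkF_congr (iff_of_true (by decide) p0) (iff_of_true (by decide) p1)
          (iff_of_false (by decide) pab)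
      · have pab : F.Adj (inr 0) (inr 1) := by tauto
        refine ⟨Sum.inl ⟨⟨F.comap Sum.inl, h₀⟩, 1⟩, Subtype.ext ?_⟩
        show mkF (F.comap Sum.inl) v ((1 : Fin 3) ≠ 2) ((1 : Fin 3) ≠ 1) ((1 : Fin 3) ≠ 0) = F
        conv_rhs => rw [hdec]
        exact mkF_congr (iff_of_true (by decide) p0) (iff_of_false (by decide) p1)
          (iff_of_true (by decide) pab)
      · have pab : F.Adj (inr 0) (inr 1) := by tauto
        refine ⟨Sum.inl ⟨⟨F.comap Sum.inl, h₀⟩, 2⟩, Subtype.ext ?_⟩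
        show mkF (F.comap Sum.inl) v ((2 : Fin 3) ≠ 2) ((2 : Fin 3) ≠ 1) ((2 : Fin 3) ≠ 0) = F
        conv_rhs => rw [hdec]
        exact mkF_congr (iff_of_false (by decide) p0) (iff_of_true (by decide) p1)
          (iff_of_true (by decide) pab)
      · exact absurd hlk0 (by tauto)
    · have hT : IsSpanningTree G (F.comap Sum.inl) := (spanning_iff (v := v)).mpr hsp
      have np0 : ¬ F.Adj (inl v) (inr 0) := fun h => hnlk0 (Or.inl h)
      by_cases p1 : F.Adj (inl v) (inr 1)
      · have pab : ¬ F.Adj (inr 0) (inr 1) := fun h => hnlk0 (Or.inr ⟨p1, h⟩)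
        refine ⟨Sum.inr ⟨⟨F.comap Sum.inl, hT⟩, 0⟩, Subtype.ext ?_⟩
        show mkF (F.comap Sum.inl) v False ((0 : Fin 2) = 0) ((0 : Fin 2) = 1) = F
        conv_rhs => rw [hdec]
        exact mkF_congr (iff_of_false not_false np0) (iff_of_true rfl p1)
          (iff_of_false (by decide) pab)
      · have pab : F.Adj (inr 0) (inr 1) := by tauto
        refine ⟨Sum.inr ⟨⟨F.comap Sum.inl, hT⟩, 1⟩, Subtype.ext ?_⟩
        show mkF (F.comap Sum.inl) v False ((1 : Fin 2) = 0) ((1 : Fin 2) = 1) = F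
        conv_rhs => rw [hdec]
        exact mkF_congr (iff_of_false not_false np0) (iff_of_false (by decide) p1)
          (iff_of_true (by decide) pab)

lemma fC1_bij (G : SimpleGraph V) (v j : V) : Function.Bijective (fC1 G v j) := by
  constructor
  · rintro (⟨⟨F₀, hF⟩, k⟩ | ⟨⟨T, hT⟩, k⟩) (⟨⟨F₀', hF'⟩, k'⟩ | ⟨⟨T', hT'⟩, k'⟩) heq <;>
      obtain ⟨hE, h0, h1, hab⟩ := mkF_inj (Subtype.ext_iff.mp heq)
    · have hk : k = k' := by
        have : ∀ a b : Fin 3, ((a ≠ 2) ↔ (b ≠ 2)) → ((a ≠ 1) ↔ (b ≠ 1)) → a = b := by decide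
        exact this k k' h0 h1
      subst hE; subst hk; rfl
    · exfalso
      have : ∀ a : Fin 3, ∀ b : Fin 2,
          ¬(((a ≠ 2) ↔ (b = 0)) ∧ ((a ≠ 1) ↔ False) ∧ ((a ≠ 0) ↔ (b = 1))) := by decide
      exact this k k' ⟨h0, h1, hab⟩
    · exfalso
      have : ∀ a : Fin 3, ∀ b : Fin 2,
          ¬(((b = 0) ↔ (a ≠ 2)) ∧ (False ↔ (a ≠ 1)) ∧ ((b = 1) ↔ (a ≠ 0))) := by decide
      exact this k' k ⟨h0, h1, hab⟩
    · have hk : k = k' := by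
        have : ∀ a b : Fin 2, ((a = 0) ↔ (b = 0)) → a = b := by decide
        exact this k k' h0
      subst hE; subst hk; rfl
  · rintro ⟨F, hF⟩
    have hle := hF.1
    have hdec := mkF_decomp hle
    rw [hdec, sep_mkF_inr1_inl] at hF
    rcases hF with ⟨h₀, hlk0, hlk1, htri⟩ | ⟨hsp, hnlk1, hP0ab⟩
    · by_cases p0 : F.Adj (inl v) (inr 0) <;> by_cases p1 : F.Adj (inl v) (inr 1)
      · have pab : ¬ F.Adj (inr 0) (inr 1) := fun h => htri ⟨p0, p1, h⟩
        refine ⟨Sum.inl ⟨⟨F.comap Sum.inl, h₀⟩, 0⟩, Subtype.ext ?_⟩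
        show mkF (F.comap Sum.inl) v ((0 : Fin 3) ≠ 2) ((0 : Fin 3) ≠ 1) ((0 : Fin 3) ≠ 0) = F
        conv_rhs => rw [hdec]
        exact mkF_congr (iff_of_true (by decide) p0) (iff_of_true (by decide) p1)
          (iff_of_false (by decide) pab)
      · have pab : F.Adj (inr 0) (inr 1) := by tauto
        refine ⟨Sum.inl ⟨⟨F.comap Sum.inl, h₀⟩, 1⟩, Subtype.ext ?_⟩
        show mkF (F.comap Sum.inl) v ((1 : Fin 3) ≠ 2) ((1 : Fin 3) ≠ 1) ((1 : Fin 3) ≠ 0) = F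
        conv_rhs => rw [hdec]
        exact mkF_congr (iff_of_true (by decide) p0) (iff_of_false (by decide) p1)
          (iff_of_true (by decide) pab)
      · have pab : F.Adj (inr 0) (inr 1) := by tauto
        refine ⟨Sum.inl ⟨⟨F.comap Sum.inl, h₀⟩, 2⟩, Subtype.ext ?_⟩
        show mkF (F.comap Sum.inl) v ((2 : Fin 3) ≠ 2) ((2 : Fin 3) ≠ 1) ((2 : Fin 3) ≠ 0) = F
        conv_rhs => rw [hdec]
        exact mkF_congr (iff_of_false (by decide) p0) (iff_of_true (by decide) p1)
          (iff_of_true (by decide) pab)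
      · exact absurd hlk0 (by tauto)
    · have hT : IsSpanningTree G (F.comap Sum.inl) := (spanning_iff (v := v)).mpr hsp
      have np1 : ¬ F.Adj (inl v) (inr 1) := fun h => hnlk1 (Or.inl h)
      by_cases p0 : F.Adj (inl v) (inr 0)
      · have pab : ¬ F.Adj (inr 0) (inr 1) := fun h => hnlk1 (Or.inr ⟨p0, h⟩)
        refine ⟨Sum.inr ⟨⟨F.comap Sum.inl, hT⟩, 0⟩, Subtype.ext ?_⟩
        show mkF (F.comap Sum.inl) v ((0 : Fin 2) = 0) False ((0 : Fin 2) = 1) = F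
        conv_rhs => rw [hdec]
        exact mkF_congr (iff_of_true rfl p0) (iff_of_false not_false np1)
          (iff_of_false (by decide) pab)
      · have pab : F.Adj (inr 0) (inr 1) := by tauto
        refine ⟨Sum.inr ⟨⟨F.comap Sum.inl, hT⟩, 1⟩, Subtype.ext ?_⟩
        show mkF (F.comap Sum.inl) v ((1 : Fin 2) = 0) False ((1 : Fin 2) = 1) = F
        conv_rhs => rw [hdec]
        exact mkF_congr (iff_of_false (by decide) p0) (iff_of_false not_false np1)
          (iff_of_true (by decide) pab)
end

section
variable {V : Type*} [Fintype V] [DecidableEq V]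

lemma count_inl_inl (G : SimpleGraph V) (v i j : V) :
    twoForestCount (hatG G v) (inl i) (inl j) = 3 * twoForestCount G i j := by
  unfold twoForestCount
  rw [← Nat.card_congr (Equiv.ofBijective _ (fInl_bij G v i j)), Nat.card_prod]
  simp only [Nat.card_eq_fintype_card, Fintype.card_fin]
  omega

lemma count_diag (G : SimpleGraph V) (v : V) (c : Fin 2) :
    twoForestCount (hatG G v) (inr c) (inr c) = 0 := by
  have : IsEmpty {F : SimpleGraph (V ⊕ Fin 2) // IsTwoForestSep (hatG G v) F (inr c) (inr c)} :=
    ⟨fun x => absurd (Reachable.refl _) x.2.2.2.1⟩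
  unfold twoForestCount
  exact Nat.card_of_isEmpty

lemma count_ab (G : SimpleGraph V) (v : V) :
    twoForestCount (hatG G v) (inr 0) (inr 1) = 2 * spanningTreeCount G := by
  unfold twoForestCount spanningTreeCount
  rw [← Nat.card_congr (Equiv.ofBijective _ (fAB_bij G v)), Nat.card_prod]
  simp only [Nat.card_eq_fintype_card, Fintype.card_fin]
  omega

lemma count_c0 (G : SimpleGraph V) (v j : V) :
    twoForestCount (hatG G v) (inr 0) (inl j)
      = 3 * twoForestCount G v j + 2 * spanningTreeCount G := by
  unfold twoForestCount spanningTreeCount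
  rw [← Nat.card_congr (Equiv.ofBijective _ (fC0_bij G v j)), Nat.card_sum,
    Nat.card_prod, Nat.card_prod]
  simp only [Nat.card_eq_fintype_card, Fintype.card_fin]
  omega

lemma count_c1 (G : SimpleGraph V) (v j : V) :
    twoForestCount (hatG G v) (inr 1) (inl j)
      = 3 * twoForestCount G v j + 2 * spanningTreeCount G := by
  unfold twoForestCount spanningTreeCount
  rw [← Nat.card_congr (Equiv.ofBijective _ (fC1_bij G v j)), Nat.card_sum,
    Nat.card_prod, Nat.card_prod]
  simp only [Nat.card_eq_fintype_card, Fintype.card_fin]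
  omega
end


theorem twoForest_hat {V : Type*} [Fintype V] [DecidableEq V]
    (G : SimpleGraph V) (hG : G.Connected) (v : V) :
    (∀ i j : V, twoForestCount (hatG G v) (Sum.inl i) (Sum.inl j)
        = 3 * twoForestCount G i j) ∧
    (∀ c : Fin 2, twoForestCount (hatG G v) (Sum.inr c) (Sum.inr c) = 0) ∧
    twoForestCount (hatG G v) (Sum.inr 0) (Sum.inr 1) = 2 * spanningTreeCount G ∧
    (∀ (c : Fin 2) (j : V), twoForestCount (hatG G v) (Sum.inr c) (Sum.inl j)
        = 3 * twoForestCount G v j + 2 * spanningTreeCount G) := by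
  
  refine ⟨count_inl_inl G v, count_diag G v, count_ab G v, fun c j => ?_⟩
  fin_cases c
  · exact count_c0 G v j
  · exact count_c1 G v j
end
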